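/- arXiv:2508.14981 — 10 statements merged into one kernel-verified Lean document; each statement's English description precedes it below -/
import Mathlib

section
/- Let C be a category, L a class of morphisms of C, and m : X → D a morphism whose codomain D is an L-local object. Then m is right orthogonal to every morphism of L if and only if its domain X is an L-local object. -/
open CategoryTheory CategoryTheory.Limits

universe v u v₂ u₂

namespace DFS

variable {C : Type u} [Category.{v} C]

/-- `f` is (left) orthogonal to `g`: every commutative square from `f` to `g`
admits a unique diagonal filler. -/
def Orth {A B X Y : C} (f : A ⟶ B) (g : X ⟶ Y) : Prop :=
  ∀ (u : A ⟶ X) (v : B ⟶ Y), u ≫ g = f ≫ v → ∃! h : B ⟶ X, f ≫ h = u ∧ h ≫ g = v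

/-- Mutual orthogonality of two classes of morphisms. -/
def ClassOrth (L R : MorphismProperty C) : Prop :=
  ∀ ⦃A B X Y : C⦄ (f : A ⟶ B) (g : X ⟶ Y), L f → R g → Orth f g

/-- The class `R·L` of composites `e ≫ m` with `e ∈ L` and `m ∈ R`. -/
def Comp (R L : MorphismProperty C) : MorphismProperty C :=
  fun X Y f => ∃ (Z : C) (e : X ⟶ Z) (m : Z ⟶ Y), L e ∧ R m ∧ e ≫ m = f

/-- An object `X` is `L`-local if precomposition with every member of `L` is a
bijection of hom-sets into `X`. -/
def IsLocal (L : MorphismProperty C) (X : C) : Prop :=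
  ∀ ⦃A B : C⦄ (m : A ⟶ B), L m → Function.Bijective (fun g : B ⟶ X => m ≫ g)

/-- An object `X` is `L`-separating if precomposition with every member of `L` is an
injection of hom-sets into `X`. -/
def IsSeparating (L : MorphismProperty C) (X : C) : Prop :=
  ∀ ⦃A B : C⦄ (m : A ⟶ B), L m → Function.Injective (fun g : B ⟶ X => m ≫ g)

/-- A double (orthogonal) factorization system. -/
structure IsDFS (E J M : MorphismProperty C) : Prop where
  postcomp_iso_E : ∀ ⦃A B B' : C⦄ (e : A ⟶ B) (i : B ⟶ B'), IsIso i → E e → E (e ≫ i)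
  comp_iso_J : ∀ ⦃A' A B B' : C⦄ (i : A' ⟶ A) (j : A ⟶ B) (i' : B ⟶ B'),
      IsIso i → IsIso i' → J j → J (i ≫ j ≫ i')
  precomp_iso_M : ∀ ⦃A' A B : C⦄ (i : A' ⟶ A) (m : A ⟶ B), IsIso i → M m → M (i ≫ m)
  fac : ∀ ⦃X Y : C⦄ (f : X ⟶ Y), ∃ (A B : C) (e : X ⟶ A) (j : A ⟶ B) (m : B ⟶ Y),
      E e ∧ J j ∧ M m ∧ e ≫ j ≫ m = f
  lift : ∀ ⦃A B B'' D D' F' : C⦄ (e : A ⟶ B) (j : B ⟶ B'') (j' : D ⟶ D') (m : D' ⟶ F')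
      (u : A ⟶ D) (v : B'' ⟶ F'), E e → J j → J j' → M m →
      e ≫ j ≫ v = u ≫ j' ≫ m →
      ∃! st : (B ⟶ D) × (B'' ⟶ D'),
        e ≫ st.1 = u ∧ st.1 ≫ j' = j ≫ st.2 ∧ st.2 ≫ m = v

/-- An (orthogonal) factorization system. -/
structure IsFS (L R : MorphismProperty C) : Prop where
  fac : ∀ ⦃X Y : C⦄ (f : X ⟶ Y), ∃ (Z : C) (e : X ⟶ Z) (m : Z ⟶ Y), L e ∧ R m ∧ e ≫ m = f
  left_iff : ∀ ⦃A B : C⦄ (f : A ⟶ B), L f ↔ ∀ ⦃X Y : C⦄ (g : X ⟶ Y), R g → Orth f g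
  right_iff : ∀ ⦃X Y : C⦄ (g : X ⟶ Y), R g ↔ ∀ ⦃A B : C⦄ (f : A ⟶ B), L f → Orth f g

/-- Stability of a class of morphisms under pullback. -/
def StableUnderPB (P : MorphismProperty C) : Prop :=
  ∀ ⦃A B A' B' : C⦄ (f : A ⟶ B) (g : B' ⟶ B) (f' : A' ⟶ B') (h : A' ⟶ A),
    IsPullback h f' f g → P f → P f'

/-- A left Quillen functor between categories equipped with dfs's: it maps
trivial cofibrations to trivial cofibrations and cofibrations to cofibrations. -/
def LeftQuillen {D : Type u₂} [Category.{v₂} D]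
    (EC JC : MorphismProperty C) (ED JD : MorphismProperty D) (F : C ⥤ D) : Prop :=
  (∀ ⦃A B : C⦄ (f : A ⟶ B), EC f → ED (F.map f)) ∧
  (∀ ⦃A B : C⦄ (f : A ⟶ B), Comp JC EC f → Comp JD ED (F.map f))

end DFS

/-- For a class `L` of morphisms of `C` and a morphism `m : X ⟶ D`
whose codomain `D` is `L`-local, `m` is right orthogonal to every morphism of `L`
iff its domain `X` is `L`-local. -/
theorem statement0 {C : Type u} [Category.{v} C] (L : MorphismProperty C)
    {X D : C} (m : X ⟶ D) (hD : DFS.IsLocal L D) :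
    (∀ ⦃A B : C⦄ (f : A ⟶ B), L f → DFS.Orth f m) ↔ DFS.IsLocal L X := by
  constructor
  · intro h A B f hf
    constructor
    · intro g₁ g₂ hg
      simp only at hg
      have hv : g₁ ≫ m = g₂ ≫ m := (hD f hf).1 (by simp [reassoc_of% hg])
      obtain ⟨k, _, hk⟩ := h f hf (f ≫ g₁) (g₁ ≫ m) (by simp)
      have e1 := hk g₁ ⟨rfl, rfl⟩
      have e2 := hk g₂ ⟨hg.symm, hv.symm⟩
      rw [e1, e2]
    · intro u
      obtain ⟨v, hv⟩ := (hD f hf).2 (u ≫ m)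
      obtain ⟨k, ⟨hk1, _⟩, _⟩ := h f hf u v (by simpa using hv.symm)
      exact ⟨k, hk1⟩
  · intro hX A B f hf u v huv
    obtain ⟨k, hk⟩ := (hX f hf).2 u
    simp only at hk
    refine ⟨k, ⟨hk, ?_⟩, ?_⟩
    · exact (hD f hf).1 (by simp [reassoc_of% hk, huv])
    · rintro k' ⟨hk1', _⟩
      exact (hX f hf).1 (by simp [hk, hk1'])
end

section
/- Let (E, J, M) be a double factorization system on a category C with a terminal object. Then: (a) every morphism of M·J whose domain and codomain are J-local objects belongs to M; (b) the full subcategory C_{J·E} of (J·E)-local objects is reflective in C, the reflection of an object X being given by the composite j∘e : X → B from the (E, J, M)-factorization X → A → B → 1 of the unique morphism X → 1. -/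
open CategoryTheory CategoryTheory.Limits

universe v u v₂ u₂

open DFS in
/-- In a dfs, every identity lies in each of the three classes. -/
lemma dfs_id_mem {C : Type u} [Category.{v} C] {E J M : MorphismProperty C}
    (h : DFS.IsDFS E J M) (X : C) : E (𝟙 X) ∧ J (𝟙 X) ∧ M (𝟙 X) := by
  obtain ⟨A, B, e, j, m, hE, hJ, hM, hc⟩ := h.fac (𝟙 X)
  obtain ⟨⟨s, t⟩, -, huniq⟩ := h.lift e j j m e m hE hJ hJ hM rfl
  have h1 : ((𝟙 A : A ⟶ A), (𝟙 B : B ⟶ B)) = (j ≫ m ≫ e, m ≫ e ≫ j) := by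
    have ha := huniq (𝟙 A, 𝟙 B) (by simp)
    have hb := huniq (j ≫ m ≫ e, m ≫ e ≫ j) (by
      refine ⟨?_, ?_, ?_⟩ <;> simp only []
      · rw [← Category.assoc, ← Category.assoc, Category.assoc e j m, hc]; simp
      · simp
      · rw [Category.assoc, Category.assoc, hc, Category.comp_id])
    rw [ha, hb]
  have hae : j ≫ m ≫ e = 𝟙 A := by
    have := congrArg Prod.fst h1; simpa using this.symm
  have hbj : m ≫ e ≫ j = 𝟙 B := by
    have := congrArg Prod.snd h1; simpa using this.symm
  have hie : IsIso e := ⟨j ≫ m, by rw [← Category.assoc] at hc ⊢; exact hc, by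
    simpa using hae⟩
  have him : IsIso m := ⟨e ≫ j, by simpa using hbj, by simpa using hc⟩
  refine ⟨?_, ?_, ?_⟩
  · have := h.postcomp_iso_E e (inv e) inferInstance hE
    simpa using this
  · have := h.comp_iso_J e j m hie him hJ
    rwa [hc] at this
  · have := h.precomp_iso_M (inv m) m inferInstance hM
    simpa using this


/-- For a dfs `(E, J, M)` on a category with a terminal object:
(a) every morphism of `M·J` with `J`-local domain and codomain lies in `M`;
(b) the `(J·E)`-local objects form a reflective subcategory, the reflection of `X`
being `j ≫ e` coming from the `(E,J,M)`-factorization of `X ⟶ 1`. -/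
theorem statement2 {C : Type u} [Category.{v} C] [HasTerminal C]
    (E J M : MorphismProperty C) (h : DFS.IsDFS E J M) :
    (∀ ⦃X Y : C⦄ (f : X ⟶ Y), DFS.Comp M J f →
        DFS.IsLocal J X → DFS.IsLocal J Y → M f) ∧
    (∀ (X A B : C) (e : X ⟶ A) (j : A ⟶ B) (m : B ⟶ ⊤_ C),
        E e → J j → M m → e ≫ j ≫ m = terminal.from X →
        DFS.IsLocal (DFS.Comp J E) B ∧
          ∀ (Y : C), DFS.IsLocal (DFS.Comp J E) Y →
            ∀ f : X ⟶ Y, ∃! g : B ⟶ Y, (e ≫ j) ≫ g = f) := by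
  
  have hid := fun X => dfs_id_mem h X
  constructor
  · -- part (a)
    rintro X Y f ⟨Z, j, m, hJ, hM, hc⟩ hX hY
    -- get retraction r of j using J-locality of X
    obtain ⟨r, hr⟩ := (hX j hJ).2 (𝟙 X)
    simp only [] at hr
    -- show r ≫ j = 𝟙 Z using uniqueness of lifts
    obtain ⟨⟨s, t⟩, -, huniq⟩ :=
      h.lift (𝟙 X) j j m (𝟙 X) m (hid X).1 hJ hJ hM rfl
    have ha := huniq (𝟙 X, 𝟙 Z) (by simp)
    have hrm : r ≫ j ≫ m = m := by
      apply (hY j hJ).1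
      simp only []
      rw [← Category.assoc, ← Category.assoc, hr, Category.id_comp]
    have hb := huniq (j ≫ r, r ≫ j) (by
      refine ⟨?_, ?_, ?_⟩ <;> simp only []
      · simp [hr]
      · simp
      · rw [Category.assoc]; exact hrm)
    have hrj : r ≫ j = 𝟙 Z := by
      have := congrArg Prod.snd (ha.trans hb.symm); simpa using this.symm
    have : IsIso j := ⟨r, hr, hrj⟩
    rw [← hc]
    exact h.precomp_iso_M j m this hM
  · -- part (b)
    intro X A B e j m hE hJ hM hfac
    have hloc : DFS.IsLocal (DFS.Comp J E) B := by
      rintro P Q f ⟨R, e', j', hE', hJ', hc'⟩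
      constructor
      · -- injective
        intro g₁ g₂ hg
        simp only [← hc', Category.assoc] at hg
        obtain ⟨⟨s, t⟩, -, huniq⟩ :=
          h.lift e' j' (𝟙 B) m (e' ≫ j' ≫ g₁) (terminal.from Q)
            hE' hJ' (hid B).2.1 hM (by apply Subsingleton.elim)
        have h1 := huniq (j' ≫ g₁, g₁) (by
          refine ⟨rfl, by simp, by apply Subsingleton.elim⟩)
        have h2 := huniq (j' ≫ g₂, g₂) (by
          refine ⟨hg.symm, by simp, by apply Subsingleton.elim⟩)
        have := congrArg Prod.snd (h1.trans h2.symm)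
        simpa using this
      · -- surjective
        intro u
        obtain ⟨⟨s, t⟩, ⟨hs, hst, -⟩, -⟩ :=
          h.lift e' j' (𝟙 B) m u (terminal.from Q) hE' hJ' (hid B).2.1 hM
            (by apply Subsingleton.elim)
        simp only [Category.comp_id] at hst
        refine ⟨t, ?_⟩
        simp only [← hc', Category.assoc, ← hst, hs]
    refine ⟨hloc, fun Y hY f => ?_⟩
    have hej : DFS.Comp J E (e ≫ j) := ⟨A, e, j, hE, hJ, rfl⟩
    obtain ⟨g, hg⟩ := (hY (e ≫ j) hej).2 f
    refine ⟨g, hg, fun g' hg' => (hY (e ≫ j) hej).1 ?_⟩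
    simp only []
    rw [hg']
    exact hg.symm
end

section
/- Let L and R be mutually orthogonal classes of morphisms of a category C (L ⊥ R) and T = (T, η, μ) a monad on C such that T(L) ⊥ R and T²(L) ⊥ R (these hold in particular when T(L) ⊆ L). Denote by L^T, R^T and (R·L)^T the preimages of L, R and R·L under the forgetful functor V^T : C^T → C from the Eilenberg–Moore category. Then L^T ⊥ R^T and (R·L)^T = R^T·L^T. Moreover, if (L, R) is a factorization system on C, then (L^T, R^T) is a factorization system on C^T. -/
open CategoryTheory CategoryTheory.Limits

universe v u v₂ u₂

namespace DFS

/-- The preimage of a class of morphisms under the forgetful functor from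
Eilenberg–Moore algebras. -/
def algPre {C : Type u} [Category.{v} C] (T : Monad C) (P : MorphismProperty C) :
    MorphismProperty T.Algebra :=
  fun _ _ f => P f.f

end DFS


namespace DFS

variable {C : Type u} [Category.{v} C] {L R : MorphismProperty C} {T : Monad C}

lemma orthAlg (horth : ClassOrth L R)
    (hT : ∀ ⦃A B : C⦄ (f : A ⟶ B), L f → ∀ ⦃X Y : C⦄ (g : X ⟶ Y), R g →
      Orth (T.toFunctor.map f) g) :
    ClassOrth (algPre T L) (algPre T R) := by
  intro A B X Y f g hf hg u v hcomm
  have hc : u.f ≫ g.f = f.f ≫ v.f := congrArg Monad.Algebra.Hom.f hcomm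
  obtain ⟨h, ⟨h1, h2⟩, huniq⟩ := horth f.f g.f hf hg u.f v.f hc
  have sq : (A.a ≫ u.f) ≫ g.f = T.toFunctor.map f.f ≫ (B.a ≫ v.f) := by
    rw [Category.assoc, hc, ← Category.assoc, ← f.h, Category.assoc]
  obtain ⟨k, -, huk⟩ := hT f.f hf g.f hg (A.a ≫ u.f) (B.a ≫ v.f) sq
  have e1 : B.a ≫ h = k := by
    refine huk _ ⟨?_, ?_⟩
    · rw [← Category.assoc, f.h, Category.assoc, h1]
    · rw [Category.assoc, h2]
  have e2 : T.toFunctor.map h ≫ X.a = k := by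
    refine huk _ ⟨?_, ?_⟩
    · rw [← Category.assoc, ← T.toFunctor.map_comp, h1, u.h]
    · calc (T.toFunctor.map h ≫ X.a) ≫ g.f
          = T.toFunctor.map (h ≫ g.f) ≫ Y.a := by
            rw [Category.assoc, ← g.h, ← Category.assoc, ← T.toFunctor.map_comp]
        _ = B.a ≫ v.f := by rw [h2, v.h]
  refine ⟨⟨h, e2.trans e1.symm⟩, ⟨Monad.Algebra.Hom.ext h1, Monad.Algebra.Hom.ext h2⟩, ?_⟩
  intro y ⟨hy1, hy2⟩
  exact Monad.Algebra.Hom.ext (huniq y.f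
    ⟨congrArg Monad.Algebra.Hom.f hy1, congrArg Monad.Algebra.Hom.f hy2⟩)

lemma facAlg (horth : ClassOrth L R)
    (hT : ∀ ⦃A B : C⦄ (f : A ⟶ B), L f → ∀ ⦃X Y : C⦄ (g : X ⟶ Y), R g →
      Orth (T.toFunctor.map f) g)
    (hT2 : ∀ ⦃A B : C⦄ (f : A ⟶ B), L f → ∀ ⦃X Y : C⦄ (g : X ⟶ Y), R g →
      Orth (T.toFunctor.map (T.toFunctor.map f)) g)
    {A B : T.Algebra} (f : A ⟶ B) {Z : C} (e : A.A ⟶ Z) (m : Z ⟶ B.A)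
    (he : L e) (hm : R m) (hem : e ≫ m = f.f) :
    ∃ (Z' : T.Algebra) (e' : A ⟶ Z') (m' : Z' ⟶ B),
      L e'.f ∧ R m'.f ∧ e' ≫ m' = f := by
  have hfh : T.toFunctor.map (e ≫ m) ≫ B.a = A.a ≫ (e ≫ m) := by rw [hem, f.h]
  have sq : (A.a ≫ e) ≫ m = T.toFunctor.map e ≫ (T.toFunctor.map m ≫ B.a) := by
    rw [← Category.assoc, ← T.toFunctor.map_comp, hfh, Category.assoc]
  obtain ⟨z, ⟨z1, z2⟩, -⟩ := hT e he m hm (A.a ≫ e) (T.toFunctor.map m ≫ B.a) sq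
  have nat_e : e ≫ T.η.app Z = T.η.app A.A ≫ T.toFunctor.map e := by
    simpa using T.η.naturality e
  have nat_m : m ≫ T.η.app B.A = T.η.app Z ≫ T.toFunctor.map m := by
    simpa using T.η.naturality m
  have nat2_e : T.toFunctor.map (T.toFunctor.map e) ≫ T.μ.app Z =
      T.μ.app A.A ≫ T.toFunctor.map e := by
    simpa using T.μ.naturality e
  have nat2_m : T.toFunctor.map (T.toFunctor.map m) ≫ T.μ.app B.A =
      T.μ.app Z ≫ T.toFunctor.map m := by
    simpa using T.μ.naturality m
  have hunit : T.η.app Z ≫ z = 𝟙 Z := by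
    obtain ⟨w, -, hw⟩ := horth e m he hm e m rfl
    have w1 : T.η.app Z ≫ z = w := by
      refine hw _ ⟨?_, ?_⟩
      · rw [← Category.assoc, nat_e, Category.assoc, z1, ← Category.assoc,
          A.unit, Category.id_comp]
      · rw [Category.assoc, z2, ← Category.assoc, ← nat_m, Category.assoc,
          B.unit, Category.comp_id]
    have w2 : 𝟙 Z = w := hw _ ⟨Category.comp_id e, Category.id_comp m⟩
    rw [w1, ← w2]
  have hassoc : T.μ.app Z ≫ z = T.toFunctor.map z ≫ z := by
    have sq2 : (T.toFunctor.map A.a ≫ A.a ≫ e) ≫ m =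
        T.toFunctor.map (T.toFunctor.map e) ≫
          (T.toFunctor.map (T.toFunctor.map m) ≫ T.toFunctor.map B.a ≫ B.a) := by
      calc (T.toFunctor.map A.a ≫ A.a ≫ e) ≫ m
          = T.toFunctor.map A.a ≫ (A.a ≫ (e ≫ m)) := by
            rw [Category.assoc, Category.assoc]
        _ = T.toFunctor.map A.a ≫ T.toFunctor.map (e ≫ m) ≫ B.a := by rw [hfh]
        _ = T.toFunctor.map (A.a ≫ (e ≫ m)) ≫ B.a := by
            rw [T.toFunctor.map_comp A.a (e ≫ m), Category.assoc]
        _ = T.toFunctor.map (T.toFunctor.map (e ≫ m) ≫ B.a) ≫ B.a := by rw [hfh]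
        _ = T.toFunctor.map (T.toFunctor.map e) ≫
              (T.toFunctor.map (T.toFunctor.map m) ≫ T.toFunctor.map B.a ≫ B.a) := by
            rw [T.toFunctor.map_comp, T.toFunctor.map_comp e m, T.toFunctor.map_comp,
              Category.assoc, Category.assoc]
    obtain ⟨w, -, hw⟩ := hT2 e he m hm (T.toFunctor.map A.a ≫ A.a ≫ e)
      (T.toFunctor.map (T.toFunctor.map m) ≫ T.toFunctor.map B.a ≫ B.a) sq2
    have w1 : T.μ.app Z ≫ z = w := by
      refine hw _ ⟨?_, ?_⟩
      · rw [← Category.assoc, nat2_e, Category.assoc, z1, ← Category.assoc,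
          A.assoc, Category.assoc]
      · rw [Category.assoc, z2, ← Category.assoc, ← nat2_m, Category.assoc,
          B.assoc]
    have w2 : T.toFunctor.map z ≫ z = w := by
      refine hw _ ⟨?_, ?_⟩
      · rw [← Category.assoc, ← T.toFunctor.map_comp, z1, T.toFunctor.map_comp,
          Category.assoc, z1]
      · rw [Category.assoc, z2, ← Category.assoc, ← T.toFunctor.map_comp, z2,
          T.toFunctor.map_comp, Category.assoc]
    rw [w1, ← w2]
  refine ⟨{ A := Z, a := z, unit := hunit, assoc := hassoc },
    { f := e, h := z1 }, { f := m, h := z2.symm }, he, hm,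
    Monad.Algebra.Hom.ext hem⟩

end DFS

/-- Let `L ⊥ R` be mutually orthogonal classes and `T` a monad with
`T(L) ⊥ R` and `T²(L) ⊥ R`.  Then the preimages under the forgetful functor satisfy
`L^T ⊥ R^T` and `(R·L)^T = R^T · L^T`; moreover if `(L, R)` is a factorization system
then so is `(L^T, R^T)`. -/
theorem statement3 {C : Type u} [Category.{v} C] (L R : MorphismProperty C)
    (T : Monad C) (horth : DFS.ClassOrth L R)
    (hT : ∀ ⦃A B : C⦄ (f : A ⟶ B), L f → ∀ ⦃X Y : C⦄ (g : X ⟶ Y), R g →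
      DFS.Orth (T.toFunctor.map f) g)
    (hT2 : ∀ ⦃A B : C⦄ (f : A ⟶ B), L f → ∀ ⦃X Y : C⦄ (g : X ⟶ Y), R g →
      DFS.Orth (T.toFunctor.map (T.toFunctor.map f)) g) :
    DFS.ClassOrth (DFS.algPre T L) (DFS.algPre T R) ∧
    DFS.Comp (DFS.algPre T R) (DFS.algPre T L) = DFS.algPre T (DFS.Comp R L) ∧
    (DFS.IsFS L R → DFS.IsFS (DFS.algPre T L) (DFS.algPre T R)) := by
  have horthT := DFS.orthAlg horth hT
  refine ⟨horthT, ?_, ?_⟩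
  · ext A B f
    constructor
    · rintro ⟨Z', e', m', he, hm, rfl⟩
      exact ⟨Z'.A, e'.f, m'.f, he, hm, (Monad.Algebra.comp_f e' m').symm⟩
    · rintro ⟨Z, e, m, he, hm, hem⟩
      obtain ⟨Z', e', m', hec, hmc, hcomp⟩ := DFS.facAlg horth hT hT2 f e m he hm hem
      exact ⟨Z', e', m', hec, hmc, hcomp⟩
  · intro hfs
    constructor
    · -- factorization
      intro A B f
      obtain ⟨Z, e, m, he, hm, hem⟩ := hfs.fac f.f
      obtain ⟨Z', e', m', hec, hmc, hcomp⟩ := DFS.facAlg horth hT hT2 f e m he hm hem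
      exact ⟨Z', e', m', hec, hmc, hcomp⟩
    · -- left_iff
      intro A B f
      constructor
      · intro hf X Y g hg
        exact horthT f g hf hg
      · intro horthf
        obtain ⟨Z, e, m, he, hm, hem⟩ := hfs.fac f.f
        obtain ⟨Z', e', m', hec, hmc, hcomp⟩ := DFS.facAlg horth hT hT2 f e m he hm hem
        have hfac : e'.f ≫ m'.f = f.f := by
          rw [← Monad.Algebra.comp_f, hcomp]
        obtain ⟨h, ⟨hh1, hh2⟩, -⟩ := horthf m' hmc e' (𝟙 B)
          (by rw [hcomp, Category.comp_id])
        have hh1f : f.f ≫ h.f = e'.f := congrArg Monad.Algebra.Hom.f hh1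
        have hh2f : h.f ≫ m'.f = 𝟙 B.A := congrArg Monad.Algebra.Hom.f hh2
        rw [show (DFS.algPre T L f : Prop) = L f.f from rfl, hfs.left_iff f.f]
        intro X Y g hg u v hc
        obtain ⟨k, ⟨hk1, hk2⟩, hku⟩ := horth e'.f g hec hg u (m'.f ≫ v)
          (by rw [hc, ← Category.assoc, hfac])
        refine ⟨h.f ≫ k, ⟨?_, ?_⟩, ?_⟩
        · rw [← Category.assoc, hh1f, hk1]
        · rw [Category.assoc, hk2, ← Category.assoc, hh2f, Category.id_comp]
        · rintro y ⟨hy1, hy2⟩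
          have hmy : m'.f ≫ y = k := hku _
            ⟨by rw [← Category.assoc, hfac, hy1], by rw [Category.assoc, hy2]⟩
          rw [← hmy, ← Category.assoc, hh2f, Category.id_comp]
    · -- right_iff
      intro X Y g
      constructor
      · intro hg A B f hf
        exact horthT f g hf hg
      · intro horthg
        obtain ⟨Z, e, m, he, hm, hem⟩ := hfs.fac g.f
        obtain ⟨Z', e', m', hec, hmc, hcomp⟩ := DFS.facAlg horth hT hT2 g e m he hm hem
        have hfac : e'.f ≫ m'.f = g.f := by
          rw [← Monad.Algebra.comp_f, hcomp]
        obtain ⟨h, ⟨hh1, hh2⟩, -⟩ := horthg e' hec (𝟙 X) m'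
          (by rw [hcomp, Category.id_comp])
        have hh1f : e'.f ≫ h.f = 𝟙 X.A := congrArg Monad.Algebra.Hom.f hh1
        have hh2f : h.f ≫ g.f = m'.f := congrArg Monad.Algebra.Hom.f hh2
        rw [show (DFS.algPre T R g : Prop) = R g.f from rfl, hfs.right_iff g.f]
        intro A B f hf u v hc
        obtain ⟨k, ⟨hk1, hk2⟩, hku⟩ := horth f m'.f hf hmc (u ≫ e'.f) v
          (by rw [Category.assoc, hfac, hc])
        refine ⟨k ≫ h.f, ⟨?_, ?_⟩, ?_⟩
        · rw [← Category.assoc, hk1, Category.assoc, hh1f, Category.comp_id]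
        · rw [Category.assoc, hh2f, hk2]
        · rintro y ⟨hy1, hy2⟩
          have hye : y ≫ e'.f = k := hku _
            ⟨by rw [← Category.assoc, hy1], by rw [Category.assoc, hfac, hy2]⟩
          rw [← hye, Category.assoc, hh1f, Category.comp_id]
end

section
/- Let (E, J, M) be a double factorization system on a bicomplete category C, and let T = (T, η, μ) be a monad on C whose underlying functor T preserves all small colimits and satisfies T(E) ⊆ E and T(J) ⊆ J. Then the preimages E^T = (V^T)^{-1}(E), J^T = (V^T)^{-1}(J), M^T = (V^T)^{-1}(M) under the forgetful functor V^T : C^T → C form a double factorization system on the Eilenberg–Moore category C^T; in particular, the free–forgetful adjunction F^T ⊣ V^T is a Quillen adjunction with respect to these dfs's. -/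
open CategoryTheory CategoryTheory.Limits

universe v u v₂ u₂

/-- Let `(E, J, M)` be a dfs on a bicomplete category `C` and
`T` a monad whose underlying functor preserves all small colimits, trivial
cofibrations (`T(E) ⊆ E`) and bifibrant morphisms (`T(J) ⊆ J`).  Then the preimages
of `E`, `J`, `M` under the forgetful functor form a dfs on `C^T`; in particular the
free functor `F^T` is a left Quillen functor, i.e. `F^T ⊣ V^T` is a Quillen
adjunction. -/
theorem statement4 {C : Type u} [Category.{v} C] [HasLimits C] [HasColimits C]
    (E J M : MorphismProperty C) (h : DFS.IsDFS E J M) (T : Monad C)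
    [PreservesColimits T.toFunctor]
    (hE : ∀ ⦃A B : C⦄ (f : A ⟶ B), E f → E (T.toFunctor.map f))
    (hJ : ∀ ⦃A B : C⦄ (f : A ⟶ B), J f → J (T.toFunctor.map f)) :
    DFS.IsDFS (DFS.algPre T E) (DFS.algPre T J) (DFS.algPre T M) ∧
    DFS.LeftQuillen E J (DFS.algPre T E) (DFS.algPre T J) T.free := by
  have eta_nat : ∀ {X Y : C} (f : X ⟶ Y), f ≫ T.η.app Y = T.η.app X ≫ T.map f := by
    intro X Y f; simpa using T.η.naturality f
  have mu_nat : ∀ {X Y : C} (f : X ⟶ Y),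
      T.map (T.map f) ≫ T.μ.app Y = T.μ.app X ≫ T.map f := by
    intro X Y f; simpa using T.μ.naturality f
  constructor
  · constructor
    · intro A B B' e i hi he
      have h1 : IsIso i.f := by
        have : IsIso (T.forget.map i) := inferInstance
        exact this
      have := h.postcomp_iso_E e.f i.f h1 he
      simpa [DFS.algPre] using this
    · intro A' A B B' i j i' hi hi' hj
      have h1 : IsIso i.f := by
        have : IsIso (T.forget.map i) := inferInstance
        exact this
      have h2 : IsIso i'.f := by
        have : IsIso (T.forget.map i') := inferInstance
        exact this
      have := h.comp_iso_J i.f j.f i'.f h1 h2 hj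
      simpa [DFS.algPre] using this
    · intro A' A B i m hi hm
      have h1 : IsIso i.f := by
        have : IsIso (T.forget.map i) := inferInstance
        exact this
      have := h.precomp_iso_M i.f m.f h1 hm
      simpa [DFS.algPre] using this
    · -- factorization
      intro X Y f
      obtain ⟨A, B, e, j, m, he, hj, hm, hfac⟩ := h.fac f.f
      have comm' : T.map e ≫ T.map j ≫ T.map m ≫ Y.a = X.a ≫ e ≫ j ≫ m := by
        calc T.map e ≫ T.map j ≫ T.map m ≫ Y.a = T.map (e ≫ j ≫ m) ≫ Y.a := by simp
          _ = T.map f.f ≫ Y.a := by rw [hfac]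
          _ = X.a ≫ f.f := f.h
          _ = X.a ≫ e ≫ j ≫ m := by rw [← hfac]
      obtain ⟨⟨a, b⟩, ⟨ha1, ha2, ha3⟩, huniq⟩ :=
        h.lift (T.map e) (T.map j) j m (X.a ≫ e) (T.map m ≫ Y.a)
          (hE e he) (hJ j hj) hj hm (by simpa using comm')
      dsimp only at ha1 ha2 ha3
      -- unit axioms
      obtain ⟨⟨s, t⟩, _, huniq1⟩ :=
        h.lift e j j m e m he hj hj hm rfl
      have hu1 : (𝟙 A, 𝟙 B) = (s, t) := huniq1 _ ⟨by simp, by simp, by simp⟩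
      have hu2 : (T.η.app A ≫ a, T.η.app B ≫ b) = (s, t) := by
        refine huniq1 _ ⟨?_, ?_, ?_⟩
        · show e ≫ T.η.app A ≫ a = e
          rw [reassoc_of% (eta_nat e), ha1, X.unit_assoc]
        · show (T.η.app A ≫ a) ≫ j = j ≫ T.η.app B ≫ b
          simp only [Category.assoc]
          rw [ha2, reassoc_of% (eta_nat j)]
        · show (T.η.app B ≫ b) ≫ m = m
          simp only [Category.assoc]
          rw [ha3, ← reassoc_of% (eta_nat m), Y.unit, Category.comp_id]
      have hueq := hu2.trans hu1.symm
      have hunitA : T.η.app A ≫ a = 𝟙 A := congrArg Prod.fst hueq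
      have hunitB : T.η.app B ≫ b = 𝟙 B := congrArg Prod.snd hueq
      -- associativity axioms
      have comm2 : T.map (T.map e) ≫ T.map (T.map j) ≫ T.μ.app B ≫ T.map m ≫ Y.a =
          (T.μ.app X.A ≫ X.a ≫ e) ≫ j ≫ m := by
        simp only [Category.assoc]
        rw [reassoc_of% (mu_nat j), reassoc_of% (mu_nat e), comm']
      obtain ⟨⟨s2, t2⟩, _, huniq2⟩ :=
        h.lift (T.map (T.map e)) (T.map (T.map j)) j m
          (T.μ.app X.A ≫ X.a ≫ e) (T.μ.app B ≫ T.map m ≫ Y.a)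
          (hE _ (hE e he)) (hJ _ (hJ j hj)) hj hm comm2
      have hv1 : (T.μ.app A ≫ a, T.μ.app B ≫ b) = (s2, t2) := by
        refine huniq2 _ ⟨?_, ?_, ?_⟩
        · show T.map (T.map e) ≫ T.μ.app A ≫ a = T.μ.app X.A ≫ X.a ≫ e
          rw [reassoc_of% (mu_nat e), ha1]
        · show (T.μ.app A ≫ a) ≫ j = T.map (T.map j) ≫ T.μ.app B ≫ b
          simp only [Category.assoc]
          rw [ha2, reassoc_of% (mu_nat j)]
        · show (T.μ.app B ≫ b) ≫ m = T.μ.app B ≫ T.map m ≫ Y.a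
          simp only [Category.assoc]
          rw [ha3]
      have hv2 : (T.map a ≫ a, T.map b ≫ b) = (s2, t2) := by
        refine huniq2 _ ⟨?_, ?_, ?_⟩
        · show T.map (T.map e) ≫ T.map a ≫ a = T.μ.app X.A ≫ X.a ≫ e
          rw [← Functor.map_comp_assoc, ha1, Functor.map_comp_assoc, ha1,
            reassoc_of% X.assoc]
        · show (T.map a ≫ a) ≫ j = T.map (T.map j) ≫ T.map b ≫ b
          simp only [Category.assoc]
          rw [ha2, ← Functor.map_comp_assoc, ha2, Functor.map_comp_assoc]
        · show (T.map b ≫ b) ≫ m = T.μ.app B ≫ T.map m ≫ Y.a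
          simp only [Category.assoc]
          rw [ha3, ← Functor.map_comp_assoc, ha3, Functor.map_comp_assoc,
            ← Y.assoc, reassoc_of% (mu_nat m)]
      have hveq := hv1.trans hv2.symm
      have hassocA : T.μ.app A ≫ a = T.map a ≫ a := congrArg Prod.fst hveq
      have hassocB : T.μ.app B ≫ b = T.map b ≫ b := congrArg Prod.snd hveq
      refine ⟨⟨A, a, hunitA, hassocA⟩, ⟨B, b, hunitB, hassocB⟩,
        ⟨e, ha1⟩, ⟨j, ha2.symm⟩, ⟨m, ha3.symm⟩, he, hj, hm, ?_⟩
      apply Monad.Algebra.Hom.ext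
      exact hfac
    · -- lifting
      intro A B B'' D D' F' e j j' m u v he hj hj' hm hcomm
      have hcomm' : e.f ≫ j.f ≫ v.f = u.f ≫ j'.f ≫ m.f := by
        have := congrArg Monad.Algebra.Hom.f hcomm
        simpa using this
      obtain ⟨⟨s, t⟩, ⟨hs1, hs2, hs3⟩, huniq⟩ :=
        h.lift e.f j.f j'.f m.f u.f v.f he hj hj' hm hcomm'
      dsimp only at hs1 hs2 hs3
      have commT : T.map e.f ≫ T.map j.f ≫ (B''.a ≫ v.f) =
          (A.a ≫ u.f) ≫ j'.f ≫ m.f := by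
        simp only [Category.assoc]
        rw [reassoc_of% j.h, reassoc_of% e.h, hcomm']
      obtain ⟨⟨s', t'⟩, _, huniqT⟩ :=
        h.lift (T.map e.f) (T.map j.f) j'.f m.f (A.a ≫ u.f) (B''.a ≫ v.f)
          (hE _ he) (hJ _ hj) hj' hm commT
      have hw1 : (B.a ≫ s, B''.a ≫ t) = (s', t') := by
        refine huniqT _ ⟨?_, ?_, ?_⟩
        · show T.map e.f ≫ B.a ≫ s = A.a ≫ u.f
          rw [reassoc_of% e.h, hs1]
        · show (B.a ≫ s) ≫ j'.f = T.map j.f ≫ B''.a ≫ t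
          simp only [Category.assoc]
          rw [hs2, reassoc_of% j.h]
        · show (B''.a ≫ t) ≫ m.f = B''.a ≫ v.f
          simp only [Category.assoc]
          rw [hs3]
      have hw2 : (T.map s ≫ D.a, T.map t ≫ D'.a) = (s', t') := by
        refine huniqT _ ⟨?_, ?_, ?_⟩
        · show T.map e.f ≫ T.map s ≫ D.a = A.a ≫ u.f
          rw [← Functor.map_comp_assoc, hs1, u.h]
        · show (T.map s ≫ D.a) ≫ j'.f = T.map j.f ≫ T.map t ≫ D'.a
          simp only [Category.assoc]
          rw [← j'.h, ← Functor.map_comp_assoc, hs2, Functor.map_comp_assoc]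
        · show (T.map t ≫ D'.a) ≫ m.f = B''.a ≫ v.f
          simp only [Category.assoc]
          rw [← m.h, ← Functor.map_comp_assoc, hs3, v.h]
      have hwe := hw2.trans hw1.symm
      have hsh : T.map s ≫ D.a = B.a ≫ s := congrArg Prod.fst hwe
      have hth : T.map t ≫ D'.a = B''.a ≫ t := congrArg Prod.snd hwe
      refine ⟨(⟨s, hsh⟩, ⟨t, hth⟩), ⟨?_, ?_, ?_⟩, ?_⟩
      · apply Monad.Algebra.Hom.ext; exact hs1
      · apply Monad.Algebra.Hom.ext; exact hs2
      · apply Monad.Algebra.Hom.ext; exact hs3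
      · rintro ⟨s₀, t₀⟩ ⟨hq1, hq2, hq3⟩
        dsimp only at hq1 hq2 hq3
        have heq : (s₀.f, t₀.f) = (s, t) := by
          refine huniq _ ⟨?_, ?_, ?_⟩
          · have := congrArg Monad.Algebra.Hom.f hq1
            simpa using this
          · have := congrArg Monad.Algebra.Hom.f hq2
            simpa using this
          · have := congrArg Monad.Algebra.Hom.f hq3
            simpa using this
        refine Prod.ext ?_ ?_ <;> apply Monad.Algebra.Hom.ext
        · exact congrArg Prod.fst heq
        · exact congrArg Prod.snd heq
  · -- left Quillen
    constructor
    · intro A B f hf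
      exact hE f hf
    · rintro A B f ⟨Z, e, m, he, hm, hfac⟩
      refine ⟨T.free.obj Z, T.free.map e, T.free.map m, hE e he, hJ m hm, ?_⟩
      rw [← T.free.map_comp, hfac]
end

section
/- Let (E, J, M) be a double factorization system on a bicomplete category C, and T = (T, η, μ) a monad on C whose underlying functor preserves all small colimits and satisfies T(E) ⊆ E and T(J) ⊆ J. Let S denote either the class J or the class J·E, and let S^T denote the corresponding class J^T or J^T·E^T in C^T (preimages under the forgetful functor V^T). Then V^T preserves and reflects S-local objects: a T-algebra (A, h) is S^T-local in C^T if and only if its underlying object A is S-local in C. -/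
open CategoryTheory CategoryTheory.Limits

universe v u v₂ u₂

/-!
The free–forgetful adjunction identifies maps `B ⟶ A` with algebra maps from the free algebra on
`B` to `(A, a)`, naturally in `B`; since free algebra maps on members of `S` lie in `S^T`,
locality of `(A, a)` gives locality of `A`. Conversely, if `A` is `S`-local, a member
`m : (Y, y) ⟶ (Z, z)` of `S^T` induces a bijection on underlying maps into `A`, and the unique
extension `g` of an algebra map is again one: `T g ≫ a` and `z ≫ g` agree after precomposition
with `T m`, which lies in `S` because `T(E) ⊆ E` and `T(J) ⊆ J`.
-/

namespace DFS

section Comp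

variable {C : Type u} [Category.{v} C]

lemma comp_mono {R R' L L' : MorphismProperty C} (hR : R ≤ R') (hL : L ≤ L') :
    Comp R L ≤ Comp R' L' := by
  rintro X Y f ⟨Z, e, m, he, hm, rfl⟩
  exact ⟨Z, e, m, hL _ he, hR _ hm, rfl⟩

lemma comp_inverseImage_le {D : Type u₂} [Category.{v₂} D] (F : C ⥤ D)
    (R L : MorphismProperty D) :
    Comp (R.inverseImage F) (L.inverseImage F) ≤ (Comp R L).inverseImage F := by
  rintro X Y f ⟨Z, e, m, he, hm, rfl⟩
  exact ⟨F.obj Z, F.map e, F.map m, he, hm, (F.map_comp e m).symm⟩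

end Comp

section Algebra

variable {C : Type u} [Category.{v} C] (T : Monad C)

lemma bijective_precomp_of_bijective_precomp_free (X : T.Algebra) {A B : C} (m : A ⟶ B)
    (hm : Function.Bijective fun k : T.free.obj B ⟶ X => T.free.map m ≫ k) :
    Function.Bijective fun g : B ⟶ X.A => m ≫ g := by
  have hconj : (fun g : B ⟶ X.A => m ≫ g) =
      T.adj.homEquiv A X ∘ (fun k => T.free.map m ≫ k) ∘ (T.adj.homEquiv B X).symm := by
    funext g
    change m ≫ g = T.adj.homEquiv A X (T.free.map m ≫ (T.adj.homEquiv B X).symm g)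
    rw [Adjunction.homEquiv_naturality_left]
    exact congrArg (m ≫ ·) ((T.adj.homEquiv B X).apply_symm_apply g).symm
  rw [hconj]
  exact (T.adj.homEquiv A X).bijective.comp (hm.comp (T.adj.homEquiv B X).symm.bijective)

variable {T} {S : MorphismProperty C} {S' : MorphismProperty T.Algebra}

lemma isLocal_of_isLocal_free (hfree : S ≤ S'.inverseImage T.free) {X : T.Algebra}
    (hX : IsLocal S' X) : IsLocal S X.A :=
  fun _ _ m hm => bijective_precomp_of_bijective_precomp_free T X m (hX _ (hfree _ hm))

lemma isLocal_of_isLocal_forget (hforget : S' ≤ S.inverseImage T.forget)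
    (hT : S ≤ S.inverseImage T.toFunctor) {X : T.Algebra} (hX : IsLocal S X.A) :
    IsLocal S' X := by
  intro Y Z m hm
  have hA := hX m.f (hforget _ hm)
  refine ⟨fun g₁ g₂ hg => Monad.Algebra.Hom.ext (hA.1 (congrArg Monad.Algebra.Hom.f hg)),
    fun u => ?_⟩
  obtain ⟨g, hg : m.f ≫ g = u.f⟩ := hA.2 u.f
  have hg_alg : T.map g ≫ X.a = Z.a ≫ g := by
    apply (hX (T.map m.f) (hT _ (hforget _ hm))).1
    change T.map m.f ≫ T.map g ≫ X.a = T.map m.f ≫ Z.a ≫ g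
    rw [← Functor.map_comp_assoc, hg, u.h, m.h_assoc, hg]
  exact ⟨⟨g, hg_alg⟩, Monad.Algebra.Hom.ext hg⟩

theorem isLocal_iff_isLocal_forget (hforget : S' ≤ S.inverseImage T.forget)
    (hfree : S ≤ S'.inverseImage T.free) (hT : S ≤ S.inverseImage T.toFunctor)
    (X : T.Algebra) : IsLocal S' X ↔ IsLocal S X.A :=
  ⟨isLocal_of_isLocal_free hfree, isLocal_of_isLocal_forget hforget hT⟩

end Algebra

end DFS

theorem statement5_general {C : Type u} [Category.{v} C]
    (E J : MorphismProperty C) (T : Monad C)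
    (hE : ∀ ⦃A B : C⦄ (f : A ⟶ B), E f → E (T.toFunctor.map f))
    (hJ : ∀ ⦃A B : C⦄ (f : A ⟶ B), J f → J (T.toFunctor.map f)) :
    ∀ X : T.Algebra,
      (DFS.IsLocal (DFS.algPre T J) X ↔ DFS.IsLocal J X.A) ∧
      (DFS.IsLocal (DFS.Comp (DFS.algPre T J) (DFS.algPre T E)) X ↔
        DFS.IsLocal (DFS.Comp J E) X.A) := by
  -- `DFS.algPre T P` is `P.inverseImage T.forget`, and `(T.free.map m).f` is `T.map m`.
  have hJE : DFS.Comp J E ≤ DFS.Comp (J.inverseImage T.toFunctor) (E.inverseImage T.toFunctor) :=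
    DFS.comp_mono hJ hE
  intro X
  exact ⟨DFS.isLocal_iff_isLocal_forget le_rfl hJ hJ X,
    DFS.isLocal_iff_isLocal_forget (DFS.comp_inverseImage_le T.forget J E)
      (hJE.trans (DFS.comp_inverseImage_le T.free (DFS.algPre T J) (DFS.algPre T E)))
      (hJE.trans (DFS.comp_inverseImage_le T.toFunctor J E)) X⟩

/-- Let `(E, J, M)` be a dfs on a bicomplete category `C` and
`T` a monad whose underlying functor preserves all small colimits, `T(E) ⊆ E` and
`T(J) ⊆ J`.  Then the forgetful functor preserves and reflects `S`-local objects,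
for `S = J` and for `S = J·E`: a `T`-algebra is `S^T`-local iff its underlying
object is `S`-local. -/
theorem statement5 {C : Type u} [Category.{v} C] [HasLimits C] [HasColimits C]
    (E J M : MorphismProperty C) (h : DFS.IsDFS E J M) (T : Monad C)
    [PreservesColimits T.toFunctor]
    (hE : ∀ ⦃A B : C⦄ (f : A ⟶ B), E f → E (T.toFunctor.map f))
    (hJ : ∀ ⦃A B : C⦄ (f : A ⟶ B), J f → J (T.toFunctor.map f)) :
    ∀ X : T.Algebra,
      (DFS.IsLocal (DFS.algPre T J) X ↔ DFS.IsLocal J X.A) ∧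
      (DFS.IsLocal (DFS.Comp (DFS.algPre T J) (DFS.algPre T E)) X ↔
        DFS.IsLocal (DFS.Comp J E) X.A) :=
  statement5_general E J T hE hJ
end

section
/- Let (E_C, J_C, M_C) and (E_D, J_D, M_D) be double factorization systems on bicomplete categories C and D respectively, and let T = (T, η, μ) and H = (H, ζ, ν) be monads on C and D whose underlying functors preserve all small colimits, trivial cofibrations (T(E_C) ⊆ E_C, H(E_D) ⊆ E_D) and bifibrant morphisms (T(J_C) ⊆ J_C, H(J_D) ⊆ J_D). Suppose L ⊣ R with L : C → D is a Quillen adjunction and Q : C^T ← D^H is a functor satisfying R ∘ V^H = V^T ∘ Q, where V^T, V^H denote the forgetful functors. Then Q admits a left adjoint P, and P ⊣ Q is a Quillen adjunction with respect to the right-induced dfs's on C^T and D^H. -/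
open CategoryTheory CategoryTheory.Limits

universe v u v₂ u₂

/-!
The left adjoint `P` of `Q` exists by the adjoint lifting theorem: `V^H` is monadic, and `D^H`
has coequalizers because `H` preserves them.

In a dfs `(E, J, M)`, `E` is exactly the class of maps left orthogonal to `M·J`, and `J·E` the
class of maps left orthogonal to `M`. By adjunction `P f ⊥ g` iff `f ⊥ Q g`; a morphism of
algebras is orthogonal to another as soon as its underlying map and the image of that under `T`
are orthogonal to the underlying one; and `V^T Q = R V^H`. Since `T` preserves `E_C` and `J_C`,
it therefore suffices that `k ⊥ R g` for `k` in `E_C` (resp. `J_C·E_C`) and `g` in `M_D·J_D`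
(resp. `M_D`), which transposes to `L k ⊥ g` and holds because `L` is left Quillen.
-/

namespace DFS

section Orthogonality

variable {C : Type u} [Category.{v} C]

theorem Orth.ext {A B X Y : C} {f : A ⟶ B} {g : X ⟶ Y} (hO : Orth f g) {d d' : B ⟶ X}
    (h₁ : f ≫ d = f ≫ d') (h₂ : d ≫ g = d' ≫ g) : d = d' :=
  (hO (f ≫ d) (d ≫ g) (Category.assoc _ _ _)).unique ⟨rfl, rfl⟩ ⟨h₁.symm, h₂.symm⟩

theorem Orth.isIso_of_orth_comp {X Y Z : C} {a : X ⟶ Z} {b : Z ⟶ Y} (hab : Orth a b)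
    (h : Orth (a ≫ b) b) : IsIso b := by
  obtain ⟨d, ⟨had, hdb⟩, -⟩ := h a (𝟙 Y) (by simp)
  exact ⟨d, hab.ext (by simpa using had) (by simp [hdb]), hdb⟩

theorem orth_map_iff {D : Type u₂} [Category.{v₂} D] {F : C ⥤ D} {G : D ⥤ C} (adj : F ⊣ G)
    {A B : C} {X Y : D} (f : A ⟶ B) (g : X ⟶ Y) : Orth (F.map f) g ↔ Orth f (G.map g) := by
  refine (adj.homEquiv A X).forall_congr fun u ↦ (adj.homEquiv B Y).forall_congr fun v ↦ ?_
  refine imp_congr ?_ ((adj.homEquiv B X).existsUnique_congr fun d ↦ ?_) <;>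
    simp only [← adj.homEquiv_naturality_right, ← adj.homEquiv_naturality_left,
      (adj.homEquiv _ _).apply_eq_iff_eq]

end Orthogonality

theorem Comp.map {C : Type u} [Category.{v} C] {D : Type u₂} [Category.{v₂} D]
    {E J : MorphismProperty C} {E' J' : MorphismProperty D} (F : C ⥤ D)
    (hE : ∀ ⦃A B : C⦄ (f : A ⟶ B), E f → E' (F.map f))
    (hJ : ∀ ⦃A B : C⦄ (f : A ⟶ B), J f → J' (F.map f)) {A B : C} {f : A ⟶ B}
    (hf : Comp J E f) : Comp J' E' (F.map f) := by
  obtain ⟨Z, e, j, he, hj, rfl⟩ := hf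
  exact ⟨F.obj Z, F.map e, F.map j, hE e he, hJ j hj, (F.map_comp e j).symm⟩

namespace IsDFS

variable {C : Type u} [Category.{v} C] {E J M : MorphismProperty C} (h : IsDFS E J M)
include h

theorem lift_ext {A B B'' D D' F' : C} {e : A ⟶ B} {j : B ⟶ B''} {j' : D ⟶ D'} {m : D' ⟶ F'}
    (he : E e) (hj : J j) (hj' : J j') (hm : M m) {s s' : B ⟶ D} {t t' : B'' ⟶ D'}
    (h₁ : e ≫ s = e ≫ s') (h₂ : s ≫ j' = j ≫ t) (h₂' : s' ≫ j' = j ≫ t')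
    (h₃ : t ≫ m = t' ≫ m) : s = s' ∧ t = t' := by
  obtain ⟨_, _, huniq⟩ := h.lift e j j' m (e ≫ s) (t ≫ m) he hj hj' hm
    (by rw [Category.assoc, reassoc_of% h₂])
  exact Prod.ext_iff.mp ((huniq (s, t) ⟨rfl, h₂, rfl⟩).trans
    (huniq (s', t') ⟨h₁.symm, h₂', h₃.symm⟩).symm)

theorem J_id (X : C) : J (𝟙 X) := by
  obtain ⟨A, B, e, j, m, he, hj, hm, hfac⟩ := h.fac (𝟙 X)
  obtain ⟨hA, hB⟩ := h.lift_ext he hj hj hm (s := j ≫ m ≫ e) (s' := 𝟙 A)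
    (t := m ≫ e ≫ j) (t' := 𝟙 B) (by simp [reassoc_of% hfac]) (by simp) (by simp)
    (by simp [hfac])
  have : IsIso e := ⟨j ≫ m, hfac, by simpa using hA⟩
  have : IsIso m := ⟨e ≫ j, hB, by simpa using hfac⟩
  simpa [hfac] using h.comp_iso_J e j m inferInstance inferInstance hj

theorem orth_E_JM {A B X Y Z : C} {e : A ⟶ B} {j : X ⟶ Y} {m : Y ⟶ Z}
    (he : E e) (hj : J j) (hm : M m) : Orth e (j ≫ m) := by
  intro u v huv
  obtain ⟨⟨s, t⟩, ⟨hs, hst, ht⟩, huniq⟩ :=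
    h.lift e (𝟙 B) j m u v he (h.J_id B) hj hm (by simpa using huv.symm)
  refine ⟨s, ⟨hs, by rw [← Category.assoc, hst, Category.id_comp, ht]⟩, fun d ⟨hd, hdv⟩ ↦ ?_⟩
  exact congrArg Prod.fst (huniq (d, d ≫ j) ⟨hd, by simp, by simpa using hdv⟩)

theorem orth_EJ_M {A B B'' X Z : C} {e : A ⟶ B} {j : B ⟶ B''} {m : X ⟶ Z}
    (he : E e) (hj : J j) (hm : M m) : Orth (e ≫ j) m := by
  intro u v huv
  obtain ⟨⟨s, t⟩, ⟨hs, hst, ht⟩, huniq⟩ :=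
    h.lift e j (𝟙 X) m u v he hj (h.J_id X) hm (by simpa using huv.symm)
  refine ⟨t, ⟨by rw [Category.assoc, ← hst, Category.comp_id, hs], ht⟩, fun d ⟨hd, hdv⟩ ↦ ?_⟩
  exact congrArg Prod.snd (huniq (j ≫ d, d) ⟨by simpa using hd, by simp, hdv⟩)

theorem E_of_orth {X Y : C} {f : X ⟶ Y}
    (hf : ∀ ⦃P Q : C⦄ (g : P ⟶ Q), Comp M J g → Orth f g) : E f := by
  obtain ⟨A, B, e, j, m, he, hj, hm, rfl⟩ := h.fac f
  have := (h.orth_E_JM he hj hm).isIso_of_orth_comp (hf _ ⟨B, j, m, hj, hm, rfl⟩)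
  exact h.postcomp_iso_E e (j ≫ m) this he

theorem comp_JE_of_orth {X Y : C} {f : X ⟶ Y}
    (hf : ∀ ⦃P Q : C⦄ (g : P ⟶ Q), M g → Orth f g) : Comp J E f := by
  obtain ⟨A, B, e, j, m, he, hj, hm, rfl⟩ := h.fac f
  have := (h.orth_EJ_M he hj hm).isIso_of_orth_comp (by simpa using hf m hm)
  exact ⟨A, e, j ≫ m, he, by simpa using h.comp_iso_J (𝟙 A) j m inferInstance this hj, rfl⟩

end IsDFS

section Quillen

variable {C : Type u} [Category.{v} C] {D : Type u₂} [Category.{v₂} D]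
  {EC JC : MorphismProperty C} {ED JD MD : MorphismProperty D} {F : C ⥤ D} {G : D ⥤ C}

theorem LeftQuillen.orth_E_map (hD : IsDFS ED JD MD) (hF : LeftQuillen EC JC ED JD F)
    (adj : F ⊣ G) {A B : C} {X Y : D} {f : A ⟶ B} {g : X ⟶ Y} (hf : EC f)
    (hg : Comp MD JD g) : Orth f (G.map g) := by
  obtain ⟨Z, j, m, hj, hm, rfl⟩ := hg
  exact (orth_map_iff adj f _).1 (hD.orth_E_JM (hF.1 f hf) hj hm)

theorem LeftQuillen.orth_JE_map (hD : IsDFS ED JD MD) (hF : LeftQuillen EC JC ED JD F)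
    (adj : F ⊣ G) {A B : C} {X Y : D} {f : A ⟶ B} {g : X ⟶ Y} (hf : Comp JC EC f)
    (hg : MD g) : Orth f (G.map g) := by
  obtain ⟨Z, e, j, he, hj, hej⟩ := hF.2 f hf
  exact (orth_map_iff adj f g).1 (hej ▸ hD.orth_EJ_M he hj hg)

theorem leftQuillen_of_orth (hD : IsDFS ED JD MD) (adj : F ⊣ G)
    (hE : ∀ ⦃A B : C⦄ ⦃X Y : D⦄ (f : A ⟶ B) (g : X ⟶ Y), EC f → Comp MD JD g →
      Orth f (G.map g))
    (hJE : ∀ ⦃A B : C⦄ ⦃X Y : D⦄ (f : A ⟶ B) (g : X ⟶ Y), Comp JC EC f → MD g →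
      Orth f (G.map g)) :
    LeftQuillen EC JC ED JD F :=
  ⟨fun _ _ f hf ↦ hD.E_of_orth fun _ _ g hg ↦ (orth_map_iff adj f g).2 (hE f g hf hg),
    fun _ _ f hf ↦ hD.comp_JE_of_orth fun _ _ g hg ↦ (orth_map_iff adj f g).2 (hJE f g hf hg)⟩

end Quillen

section Algebra

variable {C : Type u} [Category.{v} C] {T : Monad C}

theorem Comp.of_algPre {E J : MorphismProperty C} {X Y : T.Algebra} {g : X ⟶ Y}
    (hg : Comp (algPre T J) (algPre T E) g) : Comp J E g.f := by
  obtain ⟨Z, e, j, he, hj, rfl⟩ := hg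
  exact ⟨Z.A, e.f, j.f, he, hj, rfl⟩

/-- The lift of an algebra square is a morphism of algebras because `B.a ≫ d` and
`T.map d ≫ X.a` both fill the same square against `T.map f.f`. -/
theorem orth_algHom {A B X Y : T.Algebra} {f : A ⟶ B} {g : X ⟶ Y}
    (h₁ : Orth f.f g.f) (h₂ : Orth (T.map f.f) g.f) : Orth f g := by
  intro u v huv
  have huv' : u.f ≫ g.f = f.f ≫ v.f := congrArg Monad.Algebra.Hom.f huv
  obtain ⟨d, ⟨hfd, hdg⟩, huniq⟩ := h₁ u.f v.f huv'
  have hd : T.map d ≫ X.a = B.a ≫ d :=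
    h₂.ext (by simp [← Functor.map_comp_assoc, hfd])
      (by rw [Category.assoc, ← g.h, ← Functor.map_comp_assoc, hdg, v.h, Category.assoc, hdg])
  refine ⟨⟨d, hd⟩, ⟨Monad.Algebra.Hom.ext hfd, Monad.Algebra.Hom.ext hdg⟩, ?_⟩
  rintro d' ⟨hfd', hdg'⟩
  exact Monad.Algebra.Hom.ext (huniq d'.f ⟨congrArg Monad.Algebra.Hom.f hfd',
    congrArg Monad.Algebra.Hom.f hdg'⟩)

namespace IsDFS

variable {E J M : MorphismProperty C} (h : IsDFS E J M)
  (hTE : ∀ ⦃A B : C⦄ (f : A ⟶ B), E f → E (T.map f))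
  (hTJ : ∀ ⦃A B : C⦄ (f : A ⟶ B), J f → J (T.map f))
include h hTE hTJ

theorem algebra_lift {A B B'' D D' F' : T.Algebra} (e : A ⟶ B) (j : B ⟶ B'') (j' : D ⟶ D')
    (m : D' ⟶ F') (u : A ⟶ D) (v : B'' ⟶ F') (he : E e.f) (hj : J j.f) (hj' : J j'.f)
    (hm : M m.f) (hw : e ≫ j ≫ v = u ≫ j' ≫ m) :
    ∃! st : (B ⟶ D) × (B'' ⟶ D'), e ≫ st.1 = u ∧ st.1 ≫ j' = j ≫ st.2 ∧ st.2 ≫ m = v := by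
  have hwf : e.f ≫ j.f ≫ v.f = u.f ≫ j'.f ≫ m.f := congrArg Monad.Algebra.Hom.f hw
  obtain ⟨⟨s, t⟩, ⟨hs, hst, ht⟩, huniq⟩ := h.lift e.f j.f j'.f m.f u.f v.f he hj hj' hm hwf
  obtain ⟨hs_alg, ht_alg⟩ : T.map s ≫ D.a = B.a ≫ s ∧ T.map t ≫ D'.a = B''.a ≫ t :=
    h.lift_ext (hTE _ he) (hTJ _ hj) hj' hm
      (by simp [← Functor.map_comp_assoc, hs])
      (by rw [Category.assoc, ← j'.h, ← Functor.map_comp_assoc, hst, Functor.map_comp_assoc])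
      (by simp [hst])
      (by rw [Category.assoc, ← m.h, ← Functor.map_comp_assoc, ht, Category.assoc, ht, v.h])
  refine ⟨(⟨s, hs_alg⟩, ⟨t, ht_alg⟩), ⟨Monad.Algebra.Hom.ext hs, Monad.Algebra.Hom.ext hst,
    Monad.Algebra.Hom.ext ht⟩, fun ⟨s', t'⟩ ⟨hs', hst', ht'⟩ ↦ ?_⟩
  obtain ⟨rfl, rfl⟩ := Prod.ext_iff.mp (huniq (s'.f, t'.f) ⟨congrArg Monad.Algebra.Hom.f hs',
    congrArg Monad.Algebra.Hom.f hst', congrArg Monad.Algebra.Hom.f ht'⟩)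
  rfl

/-- The algebra structures on the middle objects of a factorization are the unique lifts
against `T.map e`, `T.map j`; the algebra laws follow from uniqueness of such lifts. -/
theorem algebra_fac {A B : T.Algebra} (f : A ⟶ B) :
    ∃ (X Y : T.Algebra) (e : A ⟶ X) (j : X ⟶ Y) (m : Y ⟶ B),
      E e.f ∧ J j.f ∧ M m.f ∧ e ≫ j ≫ m = f := by
  obtain ⟨X, Y, e, j, m, he, hj, hm, hfac⟩ := h.fac f.f
  obtain ⟨⟨x, y⟩, ⟨hx, hxy, hy⟩, -⟩ := h.lift (T.map e) (T.map j) j m (A.a ≫ e)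
    (T.map m ≫ B.a) (hTE _ he) (hTJ _ hj) hj hm
    (by rw [Category.assoc, hfac, ← f.h, ← hfac]; simp)
  obtain ⟨hx_unit, hy_unit⟩ : T.η.app X ≫ x = 𝟙 X ∧ T.η.app Y ≫ y = 𝟙 Y :=
    h.lift_ext he hj hj hm (by rw [T.unit_naturality_assoc, hx, A.unit_assoc, Category.comp_id])
      (by rw [Category.assoc, hxy, T.unit_naturality_assoc]) (by simp)
      (by simp [hy, ← T.unit_naturality_assoc, B.unit])
  obtain ⟨hx_assoc, hy_assoc⟩ :
      T.μ.app X ≫ x = T.map x ≫ x ∧ T.μ.app Y ≫ y = T.map y ≫ y :=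
    h.lift_ext (hTE _ (hTE _ he)) (hTJ _ (hTJ _ hj)) hj hm
      (by rw [T.mu_naturality_assoc, hx, A.assoc_assoc, ← Functor.map_comp_assoc, hx,
        Functor.map_comp_assoc, hx])
      (by rw [Category.assoc, hxy, T.mu_naturality_assoc])
      (by rw [Category.assoc, hxy, ← Functor.map_comp_assoc, hxy, Functor.map_comp_assoc])
      (by rw [Category.assoc, Category.assoc, hy, ← T.mu_naturality_assoc, B.assoc,
        ← Functor.map_comp_assoc _ y m, hy, Functor.map_comp_assoc])
  exact ⟨⟨X, x, hx_unit, hx_assoc⟩, ⟨Y, y, hy_unit, hy_assoc⟩, ⟨e, hx⟩, ⟨j, hxy.symm⟩,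
    ⟨m, hy.symm⟩, he, hj, hm, Monad.Algebra.Hom.ext hfac⟩

theorem algebra : IsDFS (algPre T E) (algPre T J) (algPre T M) where
  postcomp_iso_E _ _ _ e i _ he := h.postcomp_iso_E e.f i.f (T.forget.map_isIso i) he
  comp_iso_J _ _ _ _ i j i' _ _ hj :=
    h.comp_iso_J i.f j.f i'.f (T.forget.map_isIso i) (T.forget.map_isIso i') hj
  precomp_iso_M _ _ _ i m _ hm := h.precomp_iso_M i.f m.f (T.forget.map_isIso i) hm
  fac _ _ := h.algebra_fac hTE hTJ
  lift _ _ _ _ _ _ := h.algebra_lift hTE hTJ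

end IsDFS

end Algebra

end DFS

theorem CategoryTheory.Monad.isRightAdjoint_of_forget_comp_eq {C : Type u} [Category.{v} C]
    {D : Type u₂} [Category.{v₂} D] [HasCoequalizers D] {T : Monad C} {H : Monad D}
    [PreservesColimitsOfShape WalkingParallelPair H.toFunctor] {R : D ⥤ C} [R.IsRightAdjoint]
    {Q : H.Algebra ⥤ T.Algebra} (hcomm : H.forget ⋙ R = Q ⋙ T.forget) : Q.IsRightAdjoint :=
  have : HasCoequalizers H.Algebra :=
    hasColimitsOfShape_of_hasColimitsOfShape_createsColimitsOfShape H.forget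
  isRightAdjoint_square_lift_monadic Q T.forget H.forget R (eqToIso hcomm)

theorem statement7_general {C : Type u} [Category.{v} C] {D : Type u₂} [Category.{v₂} D]
    [HasColimits D]
    (EC JC : MorphismProperty C)
    (ED JD MD : MorphismProperty D) (hD : DFS.IsDFS ED JD MD)
    (T : Monad C) (H : Monad D)
    [PreservesColimits H.toFunctor]
    (hTE : ∀ ⦃A B : C⦄ (f : A ⟶ B), EC f → EC (T.toFunctor.map f))
    (hTJ : ∀ ⦃A B : C⦄ (f : A ⟶ B), JC f → JC (T.toFunctor.map f))
    (hHE : ∀ ⦃A B : D⦄ (f : A ⟶ B), ED f → ED (H.toFunctor.map f))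
    (hHJ : ∀ ⦃A B : D⦄ (f : A ⟶ B), JD f → JD (H.toFunctor.map f))
    (L : C ⥤ D) (R : D ⥤ C) (adj : L ⊣ R)
    (hQuillen : DFS.LeftQuillen EC JC ED JD L)
    (Q : H.Algebra ⥤ T.Algebra) (hcomm : H.forget ⋙ R = Q ⋙ T.forget) :
    ∃ P : T.Algebra ⥤ H.Algebra, Nonempty (P ⊣ Q) ∧
      DFS.LeftQuillen (DFS.algPre T EC) (DFS.algPre T JC)
        (DFS.algPre H ED) (DFS.algPre H JD) P := by
  have : R.IsRightAdjoint := adj.isRightAdjoint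
  have : PreservesColimitsOfSize.{0, 0} H.toFunctor := preservesColimitsOfSize_shrink _
  have : Q.IsRightAdjoint := Monad.isRightAdjoint_of_forget_comp_eq hcomm
  have hQ {X Y : H.Algebra} (g : X ⟶ Y) {A B : C} {k : A ⟶ B} (hk : DFS.Orth k (R.map g.f)) :
      DFS.Orth k (Q.map g).f :=
    show DFS.Orth k ((Q ⋙ T.forget).map g) from hcomm ▸ hk
  refine ⟨Q.leftAdjoint, ⟨.ofIsRightAdjoint Q⟩,
    DFS.leftQuillen_of_orth (hD.algebra hHE hHJ) (.ofIsRightAdjoint Q) ?_ ?_⟩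
  · intro A B X Y f g hf hg
    have hg' := DFS.Comp.of_algPre hg
    exact DFS.orth_algHom (hQ g (hQuillen.orth_E_map hD adj hf hg'))
      (hQ g (hQuillen.orth_E_map hD adj (hTE _ hf) hg'))
  · intro A B X Y f g hf hg
    have hf' := DFS.Comp.of_algPre hf
    exact DFS.orth_algHom (hQ g (hQuillen.orth_JE_map hD adj hf' hg))
      (hQ g (hQuillen.orth_JE_map hD adj (hf'.map T.toFunctor hTE hTJ) hg))

/-- Given dfs's on bicomplete categories `C`, `D`, monads `T`, `H`
preserving small colimits, trivial cofibrations and bifibrant morphisms, a Quillen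
adjunction `L ⊣ R` and a functor `Q : D^H ⥤ C^T` commuting with the forgetful
functors (`V^H ⋙ R = Q ⋙ V^T`), the functor `Q` admits a left adjoint `P` and
`P ⊣ Q` is a Quillen adjunction for the right-induced dfs's. -/
theorem statement7 {C : Type u} [Category.{v} C] {D : Type u₂} [Category.{v₂} D]
    [HasLimits C] [HasColimits C] [HasLimits D] [HasColimits D]
    (EC JC MC : MorphismProperty C) (hC : DFS.IsDFS EC JC MC)
    (ED JD MD : MorphismProperty D) (hD : DFS.IsDFS ED JD MD)
    (T : Monad C) (H : Monad D)
    [PreservesColimits T.toFunctor] [PreservesColimits H.toFunctor]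
    (hTE : ∀ ⦃A B : C⦄ (f : A ⟶ B), EC f → EC (T.toFunctor.map f))
    (hTJ : ∀ ⦃A B : C⦄ (f : A ⟶ B), JC f → JC (T.toFunctor.map f))
    (hHE : ∀ ⦃A B : D⦄ (f : A ⟶ B), ED f → ED (H.toFunctor.map f))
    (hHJ : ∀ ⦃A B : D⦄ (f : A ⟶ B), JD f → JD (H.toFunctor.map f))
    (L : C ⥤ D) (R : D ⥤ C) (adj : L ⊣ R)
    (hQuillen : DFS.LeftQuillen EC JC ED JD L)
    (Q : H.Algebra ⥤ T.Algebra) (hcomm : H.forget ⋙ R = Q ⋙ T.forget) :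
    ∃ P : T.Algebra ⥤ H.Algebra, Nonempty (P ⊣ Q) ∧
      DFS.LeftQuillen (DFS.algPre T EC) (DFS.algPre T JC)
        (DFS.algPre H ED) (DFS.algPre H JD) P :=
  statement7_general EC JC ED JD MD hD T H hTE hTJ hHE hHJ L R adj hQuillen Q hcomm
end

section
/- Let (E, J, M) be a double factorization system on a category C with finite products and terminal object. If A is a (J·E)-local object of C, then the diagonal monomorphism Δ_A = (1_A, 1_A) : A → A × A belongs to M. Conversely, if Δ_A belongs to M, then A is a (J·E)-separating object of C. -/
open CategoryTheory CategoryTheory.Limits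

universe v u v₂ u₂

/-!
For `k = e ≫ j` with `e ∈ E`, `j ∈ J`, the lifting property of the dfs applied with the
identity (an isomorphism, hence in `J`) as the bottom `J`-arrow makes `k` left orthogonal
to `M`. If `Δ_A ∈ M`, a filler of the square `(k ≫ g₁) ≫ Δ_A = k ≫ ⟨g₁, g₂⟩` forces
`g₁ = g₂` whenever `k ≫ g₁ = k ≫ g₂`. If `A` is local, factor `Δ_A = e ≫ j ≫ m`; a
retraction `r` of `e ≫ j` satisfies `m = r ≫ Δ_A`, and the uniqueness clause applied to
the endomorphism `r ≫ e ≫ j` shows that `e ≫ j` is invertible, so `Δ_A ∈ M`.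
-/

namespace DFS

variable {C : Type u} [Category.{v} C]

lemma injective_precomp_of_orth_diag {X Z A : C} [HasBinaryProduct A A] {k : X ⟶ Z}
    (hk : Orth k (diag A)) : Function.Injective (fun g : Z ⟶ A => k ≫ g) := by
  intro g₁ g₂ (hg : k ≫ g₁ = k ≫ g₂)
  obtain ⟨t, ⟨-, ht⟩, -⟩ := hk (k ≫ g₁) (prod.lift g₁ g₂) (by ext <;> simp [hg])
  have h₁ : t = g₁ := by simpa [prod.lift_fst] using ht =≫ prod.fst
  have h₂ : t = g₂ := by simpa [prod.lift_snd] using ht =≫ prod.snd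
  rw [← h₁, ← h₂]

namespace IsDFS

variable {E J M : MorphismProperty C} (h : IsDFS E J M)
include h

lemma eq_id_of_lift {X Y Z W : C} {e : X ⟶ Y} {j : Y ⟶ Z} {m : Z ⟶ W}
    (he : E e) (hj : J j) (hm : M m) {s : Y ⟶ Y} {t : Z ⟶ Z}
    (hs : e ≫ s = e) (hst : s ≫ j = j ≫ t) (ht : t ≫ m = m) : s = 𝟙 Y ∧ t = 𝟙 Z := by
  obtain ⟨_, -, huniq⟩ := h.lift e j j m e m he hj hj hm rfl
  have hid := huniq (𝟙 Y, 𝟙 Z) (by simp)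
  have hst' := huniq (s, t) ⟨hs, hst, ht⟩
  exact Prod.ext_iff.mp (hst'.trans hid.symm)

lemma inverse_of_retraction {X Y Z W : C} {e : X ⟶ Y} {j : Y ⟶ Z} {m : Z ⟶ W}
    (he : E e) (hj : J j) (hm : M m) {r : Z ⟶ X}
    (hr : e ≫ j ≫ r = 𝟙 X) (hrm : r ≫ e ≫ j ≫ m = m) :
    j ≫ r ≫ e = 𝟙 Y ∧ r ≫ e ≫ j = 𝟙 Z :=
  h.eq_id_of_lift he hj hm (by simp [reassoc_of% hr]) (by simp)
    (by simpa using hrm)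

lemma mem_J_of_isIso {X Y : C} (f : X ⟶ Y) [IsIso f] : J f := by
  obtain ⟨P, Q, e, j, m, he, hj, hm, hfac⟩ := h.fac (𝟙 X)
  obtain ⟨hinv₁, hinv₂⟩ := h.inverse_of_retraction he hj hm hfac (by simp [hfac])
  have : IsIso e := ⟨j ≫ m, hfac, by simpa using hinv₁⟩
  have : IsIso m := ⟨e ≫ j, by simpa using hinv₂, by simpa using hfac⟩
  simpa [reassoc_of% hfac] using h.comp_iso_J e j (m ≫ f) inferInstance inferInstance hj

lemma orth_comp {X Y Z D F : C} {e : X ⟶ Y} {j : Y ⟶ Z} {m : D ⟶ F}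
    (he : E e) (hj : J j) (hm : M m) : Orth (e ≫ j) m := by
  intro u v huv
  obtain ⟨⟨s, t⟩, ⟨hs, hst, ht⟩, huniq⟩ :=
    h.lift e j (𝟙 D) m u v he hj (h.mem_J_of_isIso (𝟙 D)) hm (by simpa using huv.symm)
  refine ⟨t, ⟨by simpa [hs] using congrArg (e ≫ ·) hst.symm, ht⟩, ?_⟩
  rintro t' ⟨ht'₁, ht'₂⟩
  exact congrArg Prod.snd (huniq (j ≫ t', t') ⟨by simpa using ht'₁, by simp, ht'₂⟩)

lemma mem_M_of_retraction {X Y Z W : C} {e : X ⟶ Y} {j : Y ⟶ Z} {m : Z ⟶ W}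
    (he : E e) (hj : J j) (hm : M m) {r : Z ⟶ X}
    (hr : e ≫ j ≫ r = 𝟙 X) (hrm : r ≫ e ≫ j ≫ m = m) : M (e ≫ j ≫ m) := by
  have : IsIso (e ≫ j) :=
    ⟨r, by simpa using hr, by simpa using (h.inverse_of_retraction he hj hm hr hrm).2⟩
  simpa using h.precomp_iso_M (e ≫ j) m inferInstance hm

lemma diag_mem_M_of_isLocal {A : C} [HasBinaryProduct A A]
    (hA : IsLocal (Comp J E) A) : M (diag A) := by
  obtain ⟨Y, Z, e, j, m, he, hj, hm, hfac⟩ := h.fac (diag A)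
  have hinj := (hA (e ≫ j) ⟨Y, e, j, he, hj, rfl⟩).1
  obtain ⟨r, hr : (e ≫ j) ≫ r = 𝟙 A⟩ := (hA (e ≫ j) ⟨Y, e, j, he, hj, rfl⟩).2 (𝟙 A)
  rw [Category.assoc] at hr
  have hr_eq (p : A ⨯ A ⟶ A) (hp : diag A ≫ p = 𝟙 A) : m ≫ p = r :=
    hinj (show (e ≫ j) ≫ m ≫ p = (e ≫ j) ≫ r by simp [reassoc_of% hfac, hp, hr])
  have hm_eq : r ≫ diag A = m := by
    ext
    · simpa [prod.lift_fst] using (hr_eq prod.fst (prod.lift_fst _ _)).symm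
    · simpa [prod.lift_snd] using (hr_eq prod.snd (prod.lift_snd _ _)).symm
  rw [← hfac]
  exact h.mem_M_of_retraction he hj hm hr (by rw [hfac, hm_eq])

lemma isSeparating_of_diag_mem_M {A : C} [HasBinaryProduct A A]
    (hΔ : M (diag A)) : IsSeparating (Comp J E) A := by
  rintro X Z _ ⟨Y, e, j, he, hj, rfl⟩
  exact injective_precomp_of_orth_diag (h.orth_comp he hj hΔ)

end IsDFS

end DFS

theorem statement8_general {C : Type u} [Category.{v} C] [HasBinaryProducts C]
    (E J M : MorphismProperty C) (h : DFS.IsDFS E J M) (A : C) :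
    (DFS.IsLocal (DFS.Comp J E) A → M (prod.lift (𝟙 A) (𝟙 A))) ∧
    (M (prod.lift (𝟙 A) (𝟙 A)) → DFS.IsSeparating (DFS.Comp J E) A) :=
  ⟨h.diag_mem_M_of_isLocal, h.isSeparating_of_diag_mem_M⟩

/-- For a dfs `(E, J, M)` on a category with finite products and a
terminal object: if `A` is `(J·E)`-local then the diagonal `Δ_A : A ⟶ A ⨯ A` lies in
`M`; conversely if the diagonal lies in `M` then `A` is `(J·E)`-separating. -/
theorem statement8 {C : Type u} [Category.{v} C] [HasTerminal C] [HasBinaryProducts C]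
    (E J M : MorphismProperty C) (h : DFS.IsDFS E J M) (A : C) :
    (DFS.IsLocal (DFS.Comp J E) A → M (prod.lift (𝟙 A) (𝟙 A))) ∧
    (M (prod.lift (𝟙 A) (𝟙 A)) → DFS.IsSeparating (DFS.Comp J E) A) :=
  statement8_general E J M h A
end

section
/- Let (E, J, M) be a double factorization system on a category C, and let G = (G, ε, δ) be a comonad on C whose underlying functor preserves all small limits, trivial fibrations (G(M) ⊆ M) and bifibrant morphisms (G(J) ⊆ J). Then: (i) the preimages E_G, J_G, M_G of E, J, M under the forgetful functor U : C_G → C from the Eilenberg–Moore category of G-coalgebras form a (left-induced) double factorization system on C_G; (ii) U reflects (J·E)-local objects: if the underlying object of a G-coalgebra is (J·E)-local in C, then the coalgebra is (J_G·E_G)-local in C_G. In particular, the adjunction between the forgetful functor U and the cofree coalgebra functor is a Quillen adjunction. -/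
open CategoryTheory CategoryTheory.Limits

universe v u v₂ u₂

namespace DFS

/-- The preimage of a class of morphisms under the forgetful functor from
Eilenberg–Moore coalgebras. -/
def coalgPre {C : Type u} [Category.{v} C] (G : Comonad C) (P : MorphismProperty C) :
    MorphismProperty G.Coalgebra :=
  fun _ _ f => P f.f

end DFS

/-!
Lifting problems in coalgebras are solved by the lifts in `C`: the lifts are coalgebra maps,
and the factorizations of `C` carry coalgebra structures, because each required identity
compares two solutions of a lifting problem against `G j` and `G m` (or `G (G j)` and
`G (G m)`), which lie in `J` and `M` again, so that uniqueness of lifts applies.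
A `(J·E)`-local object `X` has `X ⟶ ⊤_ C` in `M`, hence `G X ⟶ G (⊤_ C)` is in `M` with
terminal target, which makes `G X` separating for `J·E`; that suffices to extend coalgebra maps
along members of `J_G·E_G` as coalgebra maps.
-/

namespace DFS

section Ambient

variable {C : Type u} [Category.{v} C] {E J M : MorphismProperty C}

lemma IsLocal.anti {L L' : MorphismProperty C} {X : C} (hX : IsLocal L X) (hle : L' ≤ L) :
    IsLocal L' X :=
  fun _ _ m hm => hX m (hle _ hm)

lemma IsDFS.lift_ext_s9 (h : IsDFS E J M) {A B B'' D D' F' : C} {e : A ⟶ B} {j : B ⟶ B''}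
    {j' : D ⟶ D'} {m : D' ⟶ F'} (he : E e) (hj : J j) (hj' : J j') (hm : M m)
    {s s' : B ⟶ D} {t t' : B'' ⟶ D'} (hes : e ≫ s = e ≫ s') (hst : s ≫ j' = j ≫ t)
    (hst' : s' ≫ j' = j ≫ t') (htm : t ≫ m = t' ≫ m) : s = s' ∧ t = t' := by
  obtain ⟨_, -, huniq⟩ := h.lift e j j' m (e ≫ s) (t ≫ m) he hj hj' hm
    (by rw [Category.assoc, reassoc_of% hst])
  have h₁ := huniq (s, t) ⟨rfl, hst, rfl⟩
  have h₂ := huniq (s', t') ⟨hes.symm, hst', htm.symm⟩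
  exact Prod.ext_iff.mp (h₁.trans h₂.symm)

lemma IsDFS.eq_id_of_retraction (h : IsDFS E J M) {X P Q Y : C} {e : X ⟶ P} {j : P ⟶ Q}
    {m : Q ⟶ Y} (he : E e) (hj : J j) (hm : M m) {r : Q ⟶ X} (hr : e ≫ j ≫ r = 𝟙 X)
    (hrm : r ≫ e ≫ j ≫ m = m) : j ≫ r ≫ e = 𝟙 P ∧ r ≫ e ≫ j = 𝟙 Q :=
  h.lift_ext_s9 he hj hj hm (by simp [reassoc_of% hr]) (by simp) (by simp) (by simpa using hrm)

lemma IsDFS.id_mem_J (h : IsDFS E J M) (X : C) : J (𝟙 X) := by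
  obtain ⟨_, _, e, j, m, he, hj, hm, hfac⟩ := h.fac (𝟙 X)
  obtain ⟨hP, hQ⟩ := h.eq_id_of_retraction he hj hm hfac (by rw [hfac, Category.comp_id])
  have : IsIso e := ⟨j ≫ m, hfac, by simpa using hP⟩
  have : IsIso m := ⟨e ≫ j, hQ, by simpa using hfac⟩
  simpa [hfac] using h.comp_iso_J e j m inferInstance inferInstance hj

lemma IsDFS.mem_M_of_isLocal (h : IsDFS E J M) {X T : C} (hT : IsTerminal T)
    (hX : IsLocal (Comp J E) X) (t : X ⟶ T) : M t := by
  obtain ⟨_, _, e, j, m, he, hj, hm, hfac⟩ := h.fac t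
  obtain ⟨r, hr⟩ := (hX (e ≫ j) ⟨_, e, j, he, hj, rfl⟩).2 (𝟙 X)
  have hr : e ≫ j ≫ r = 𝟙 X := by simpa using hr
  have : IsIso (e ≫ j) :=
    ⟨r, by simpa using hr, by simpa using (h.eq_id_of_retraction he hj hm hr (hT.hom_ext _ _)).2⟩
  simpa [hfac] using h.precomp_iso_M (e ≫ j) m inferInstance hm

lemma IsDFS.isSeparating_of_mem_M (h : IsDFS E J M) {W T : C} (hT : IsTerminal T)
    {t : W ⟶ T} (ht : M t) : IsSeparating (Comp J E) W := by
  rintro _ _ _ ⟨_, e, j, he, hj, rfl⟩ p q hpq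
  exact (h.lift_ext_s9 he hj (h.id_mem_J W) ht (by simpa using hpq) (Category.comp_id _)
    (Category.comp_id _) (hT.hom_ext _ _)).2

end Ambient

section Coalgebra

variable {C : Type u} [Category.{v} C] {G : Comonad C} {E J M : MorphismProperty C}

lemma Comp.coalgPre_le (R L : MorphismProperty C) :
    Comp (coalgPre G R) (coalgPre G L) ≤ coalgPre G (Comp R L) := by
  rintro _ _ _ ⟨Z, e, m, he, hm, rfl⟩
  exact ⟨Z.A, e.f, m.f, he, hm, rfl⟩

lemma isIso_f_of_isIso {X Y : G.Coalgebra} (f : X ⟶ Y) [IsIso f] : IsIso f.f :=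
  G.forget.map_isIso f

/-- Separation of `G X.A` is what makes the extension of a coalgebra map along `l` commute
with the structure maps. -/
lemma isLocal_coalgPre {L : MorphismProperty C} {X : G.Coalgebra} (hX : IsLocal L X.A)
    (hGX : IsSeparating L (G.obj X.A)) : IsLocal (coalgPre G L) X := by
  intro A B l hl
  refine ⟨fun g₁ g₂ hg => Comonad.Coalgebra.Hom.ext ((hX l.f hl).1 ?_), fun u => ?_⟩
  · simpa using congrArg Comonad.Coalgebra.Hom.f hg
  · obtain ⟨g, hg⟩ := (hX l.f hl).2 u.f
    have hg : l.f ≫ g = u.f := hg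
    have hcomm : B.a ≫ G.map g = g ≫ X.a := hGX l.f hl <| by
      calc l.f ≫ B.a ≫ G.map g = A.a ≫ G.map (l.f ≫ g) := by rw [← l.h_assoc, G.map_comp]
        _ = l.f ≫ g ≫ X.a := by rw [hg, u.h, reassoc_of% hg]
    exact ⟨⟨g, hcomm⟩, Comonad.Coalgebra.Hom.ext hg⟩

variable (h : IsDFS E J M) (hM : ∀ ⦃A B : C⦄ (f : A ⟶ B), M f → M (G.map f))
  (hJ : ∀ ⦃A B : C⦄ (f : A ⟶ B), J f → J (G.map f))
include h hM hJ

/-- Each axiom compares two solutions of one lifting problem: against `(j, m)` for the counit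
law, against `(G (G j), G (G m))` for coassociativity. -/
lemma IsDFS.coalgebra_axioms_of_lift {X Y : G.Coalgebra} {P Q : C} {e : X.A ⟶ P}
    {j : P ⟶ Q} {m : Q ⟶ Y.A} (he : E e) (hj : J j) (hm : M m) {α : P ⟶ G.obj P}
    {β : Q ⟶ G.obj Q} (hα : e ≫ α = X.a ≫ G.map e) (hαβ : α ≫ G.map j = j ≫ β)
    (hβ : β ≫ G.map m = m ≫ Y.a) :
    (α ≫ G.ε.app P = 𝟙 P ∧ β ≫ G.ε.app Q = 𝟙 Q) ∧
      (α ≫ G.δ.app P = α ≫ G.map α ∧ β ≫ G.δ.app Q = β ≫ G.map β) := by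
  constructor
  · refine h.lift_ext_s9 he hj hj hm ?_ ?_ (by simp) ?_
    · rw [reassoc_of% hα, G.counit_naturality, X.counit_assoc, Category.comp_id]
    · rw [Category.assoc, ← G.counit_naturality, reassoc_of% hαβ]
    · rw [Category.assoc, ← G.counit_naturality, reassoc_of% hβ, Y.counit, Category.comp_id,
        Category.id_comp]
  · refine h.lift_ext_s9 he hj (hJ _ (hJ j hj)) (hM _ (hM m hm)) ?_ ?_ ?_ ?_
    · simp only [reassoc_of% hα, G.delta_naturality, X.coassoc_assoc, ← G.map_comp, hα]
    · rw [Category.assoc, ← G.delta_naturality, reassoc_of% hαβ]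
    · rw [Category.assoc, ← G.map_comp, hαβ, G.map_comp, reassoc_of% hαβ]
    · rw [Category.assoc, Category.assoc, ← G.delta_naturality, reassoc_of% hβ, Y.coassoc,
        ← G.map_comp, hβ, G.map_comp, reassoc_of% hβ]

lemma IsDFS.coalgebra_fac {X Y : G.Coalgebra} (f : X ⟶ Y) :
    ∃ (P Q : G.Coalgebra) (e : X ⟶ P) (j : P ⟶ Q) (m : Q ⟶ Y),
      coalgPre G E e ∧ coalgPre G J j ∧ coalgPre G M m ∧ e ≫ j ≫ m = f := by
  obtain ⟨P, Q, e, j, m, he, hj, hm, hfac⟩ := h.fac f.f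
  have hsq : e ≫ j ≫ m ≫ Y.a = (X.a ≫ G.map e) ≫ G.map j ≫ G.map m := by
    rw [reassoc_of% hfac, ← f.h, ← hfac]; simp
  obtain ⟨⟨α, β⟩, ⟨hα, hαβ, hβ⟩, -⟩ :=
    h.lift e j (G.map j) (G.map m) _ _ he hj (hJ j hj) (hM m hm) hsq
  obtain ⟨⟨hαε, hβε⟩, hαδ, hβδ⟩ :=
    h.coalgebra_axioms_of_lift hM hJ he hj hm hα hαβ hβ
  exact ⟨⟨P, α, hαε, hαδ⟩, ⟨Q, β, hβε, hβδ⟩, ⟨e, hα.symm⟩, ⟨j, hαβ⟩, ⟨m, hβ⟩,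
    he, hj, hm, Comonad.Coalgebra.Hom.ext hfac⟩

/-- Both sides of each identity solve the same lifting problem against `(G j', G m)`. -/
lemma IsDFS.lift_coalgebra_hom {A B B'' D D' F' : G.Coalgebra} {e : A ⟶ B} {j : B ⟶ B''}
    {j' : D ⟶ D'} {m : D' ⟶ F'} {u : A ⟶ D} {v : B'' ⟶ F'} (he : E e.f) (hj : J j.f)
    (hj' : J j'.f) (hm : M m.f) {s : B.A ⟶ D.A} {t : B''.A ⟶ D'.A} (hs : e.f ≫ s = u.f)
    (hst : s ≫ j'.f = j.f ≫ t) (ht : t ≫ m.f = v.f) :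
    B.a ≫ G.map s = s ≫ D.a ∧ B''.a ≫ G.map t = t ≫ D'.a :=
  h.lift_ext_s9 he hj (hJ _ hj') (hM _ hm)
    (by rw [← e.h_assoc, ← G.map_comp, hs, u.h, reassoc_of% hs])
    (by rw [Category.assoc, ← G.map_comp, hst, G.map_comp, j.h_assoc])
    (by rw [Category.assoc, j'.h, reassoc_of% hst])
    (by rw [Category.assoc, ← G.map_comp, ht, v.h, Category.assoc, m.h, reassoc_of% ht])

lemma IsDFS.coalgebra_lift ⦃A B B'' D D' F' : G.Coalgebra⦄ (e : A ⟶ B) (j : B ⟶ B'')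
    (j' : D ⟶ D') (m : D' ⟶ F') (u : A ⟶ D) (v : B'' ⟶ F') (he : coalgPre G E e)
    (hj : coalgPre G J j) (hj' : coalgPre G J j') (hm : coalgPre G M m)
    (hsq : e ≫ j ≫ v = u ≫ j' ≫ m) :
    ∃! st : (B ⟶ D) × (B'' ⟶ D'), e ≫ st.1 = u ∧ st.1 ≫ j' = j ≫ st.2 ∧ st.2 ≫ m = v := by
  have hsq : e.f ≫ j.f ≫ v.f = u.f ≫ j'.f ≫ m.f := by
    simpa using congrArg Comonad.Coalgebra.Hom.f hsq
  obtain ⟨⟨s, t⟩, ⟨hs, hst, ht⟩, huniq⟩ := h.lift e.f j.f j'.f m.f u.f v.f he hj hj' hm hsq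
  obtain ⟨hs', ht'⟩ := h.lift_coalgebra_hom hM hJ he hj hj' hm hs hst ht
  refine ⟨(⟨s, hs'⟩, ⟨t, ht'⟩), ⟨Comonad.Coalgebra.Hom.ext hs,
    Comonad.Coalgebra.Hom.ext hst, Comonad.Coalgebra.Hom.ext ht⟩, ?_⟩
  rintro ⟨y₁, y₂⟩ ⟨hy₁, hy₂, hy₃⟩
  obtain ⟨h₁, h₂⟩ := Prod.ext_iff.mp <| huniq (y₁.f, y₂.f)
    ⟨congrArg Comonad.Coalgebra.Hom.f hy₁, congrArg Comonad.Coalgebra.Hom.f hy₂,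
      congrArg Comonad.Coalgebra.Hom.f hy₃⟩
  exact Prod.ext (Comonad.Coalgebra.Hom.ext h₁) (Comonad.Coalgebra.Hom.ext h₂)

theorem IsDFS.leftInduced : IsDFS (coalgPre G E) (coalgPre G J) (coalgPre G M) where
  postcomp_iso_E _ _ _ e i _ he := h.postcomp_iso_E e.f i.f (isIso_f_of_isIso i) he
  comp_iso_J _ _ _ _ i j i' _ _ hj :=
    h.comp_iso_J i.f j.f i'.f (isIso_f_of_isIso i) (isIso_f_of_isIso i') hj
  precomp_iso_M _ _ _ i m _ hm := h.precomp_iso_M i.f m.f (isIso_f_of_isIso i) hm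
  fac _ _ := h.coalgebra_fac hM hJ
  lift := h.coalgebra_lift hM hJ

end Coalgebra

end DFS

theorem statement9_general {C : Type u} [Category.{v} C] [HasLimits C]
    (E J M : MorphismProperty C) (h : DFS.IsDFS E J M) (G : Comonad C)
    [PreservesLimits G.toFunctor]
    (hM : ∀ ⦃A B : C⦄ (f : A ⟶ B), M f → M (G.toFunctor.map f))
    (hJ : ∀ ⦃A B : C⦄ (f : A ⟶ B), J f → J (G.toFunctor.map f)) :
    DFS.IsDFS (DFS.coalgPre G E) (DFS.coalgPre G J) (DFS.coalgPre G M) ∧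
    (∀ X : G.Coalgebra, DFS.IsLocal (DFS.Comp J E) X.A →
      DFS.IsLocal (DFS.Comp (DFS.coalgPre G J) (DFS.coalgPre G E)) X) ∧
    DFS.LeftQuillen (DFS.coalgPre G E) (DFS.coalgPre G J) E J G.forget := by
  have hGT : IsTerminal (G.obj (⊤_ C)) := terminalIsTerminal.isTerminalObj G.toFunctor _
  refine ⟨h.leftInduced hM hJ, fun X hX => ?_, fun _ _ _ he => he,
    DFS.Comp.coalgPre_le J E⟩
  have hGX : DFS.IsSeparating (DFS.Comp J E) (G.obj X.A) :=
    h.isSeparating_of_mem_M hGT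
      (hM _ (h.mem_M_of_isLocal terminalIsTerminal hX (terminal.from _)))
  exact (DFS.isLocal_coalgPre hX hGX).anti (DFS.Comp.coalgPre_le J E)

/-- Let `(E, J, M)` be a dfs on a (bicomplete) category `C` and `G` a
comonad whose underlying functor preserves all small limits, trivial fibrations
(`G(M) ⊆ M`) and bifibrant morphisms (`G(J) ⊆ J`).  Then (i) the preimages of `E`, `J`,
`M` under the forgetful functor form a (left-induced) dfs on the category of
`G`-coalgebras; (ii) the forgetful functor reflects `(J·E)`-local objects; in
particular the forgetful functor is a left Quillen functor, i.e. `U ⊣ cofree` is a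
Quillen adjunction. -/
theorem statement9 {C : Type u} [Category.{v} C] [HasLimits C] [HasColimits C]
    (E J M : MorphismProperty C) (h : DFS.IsDFS E J M) (G : Comonad C)
    [PreservesLimits G.toFunctor]
    (hM : ∀ ⦃A B : C⦄ (f : A ⟶ B), M f → M (G.toFunctor.map f))
    (hJ : ∀ ⦃A B : C⦄ (f : A ⟶ B), J f → J (G.toFunctor.map f)) :
    DFS.IsDFS (DFS.coalgPre G E) (DFS.coalgPre G J) (DFS.coalgPre G M) ∧
    (∀ X : G.Coalgebra, DFS.IsLocal (DFS.Comp J E) X.A →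
      DFS.IsLocal (DFS.Comp (DFS.coalgPre G J) (DFS.coalgPre G E)) X) ∧
    DFS.LeftQuillen (DFS.coalgPre G E) (DFS.coalgPre G J) E J G.forget :=
  statement9_general E J M h G hM hJ
end

section
/- For a double factorization system (E, J, M) on a topos C, the following are equivalent: (i) (E, J, M) is cartesian, i.e. the classes E and J·E are stable under pullback and every morphism in M·J is a monomorphism; (ii) every morphism in M and every morphism in J is a monomorphism, and each of the three classes E, J, M is stable under pullback. -/
open CategoryTheory CategoryTheory.Limits

universe v u v₂ u₂

namespace DFS

variable {C : Type u} [Category.{v} C]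

section Topos

variable [HasTerminal C]

/-- `c : B ⟶ Ω` classifies the morphism `m : A ⟶ B` (relative to the truth arrow
`tr : ⊤ ⟶ Ω`) if the evident square is a pullback. -/
def Classifies (Ω : C) (tr : ⊤_ C ⟶ Ω) {A B : C} (m : A ⟶ B) (c : B ⟶ Ω) : Prop :=
  IsPullback (terminal.from A) m tr c

/-- `(Ω, tr)` is a subobject classifier: every monomorphism has a unique
classifying morphism. -/
def IsClassifier (Ω : C) (tr : ⊤_ C ⟶ Ω) : Prop :=
  ∀ ⦃A B : C⦄ (m : A ⟶ B), Mono m → ∃! c : B ⟶ Ω, Classifies Ω tr m c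

/-- `k : Ω ⟶ Ω` is a Lawvere–Tierney topology: `k ∘ true = true`, `k ∘ k = k` and
`k ∘ ∧ = ∧ ∘ (k × k)`, where `∧ = char(true × true)`. -/
def IsLT [HasBinaryProducts C] (Ω : C) (tr : ⊤_ C ⟶ Ω) (k : Ω ⟶ Ω) : Prop :=
  tr ≫ k = tr ∧ k ≫ k = k ∧
    ∀ meet : Ω ⨯ Ω ⟶ Ω, Classifies Ω tr (prod.lift tr tr) meet →
      meet ≫ k = prod.map k k ≫ meet

/-- `m` is a `k`-dense monomorphism: its characteristic morphism `c` satisfies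
`k ∘ c = true ∘ !`. -/
def IsDense (Ω : C) (tr : ⊤_ C ⟶ Ω) (k : Ω ⟶ Ω) {A B : C} (m : A ⟶ B) : Prop :=
  ∃ c : B ⟶ Ω, Classifies Ω tr m c ∧ c ≫ k = terminal.from B ≫ tr

/-- `m` is a `k`-closed monomorphism: its characteristic morphism `c` satisfies
`k ∘ c = c`. -/
def IsClosed (Ω : C) (tr : ⊤_ C ⟶ Ω) (k : Ω ⟶ Ω) {A B : C} (m : A ⟶ B) : Prop :=
  ∃ c : B ⟶ Ω, Classifies Ω tr m c ∧ c ≫ k = c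

/-- The class of `k`-dense monomorphisms. -/
def denseMonos (Ω : C) (tr : ⊤_ C ⟶ Ω) (k : Ω ⟶ Ω) : MorphismProperty C :=
  fun _ _ m => Mono m ∧ IsDense Ω tr k m

/-- The class of `k`-closed monomorphisms. -/
def closedMonos (Ω : C) (tr : ⊤_ C ⟶ Ω) (k : Ω ⟶ Ω) : MorphismProperty C :=
  fun _ _ m => Mono m ∧ IsClosed Ω tr k m

/-- The class of epimorphisms. -/
def epis : MorphismProperty C := fun _ _ f => Epi f

/-- `X` is a `k`-sheaf: every hom into `X` extends uniquely along `k`-dense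
monomorphisms. -/
def IsSheaf (Ω : C) (tr : ⊤_ C ⟶ Ω) (k : Ω ⟶ Ω) (X : C) : Prop :=
  ∀ ⦃A B : C⦄ (m : A ⟶ B), Mono m → IsDense Ω tr k m →
    Function.Bijective (fun g : B ⟶ X => m ≫ g)

/-- `X` is a `k`-separated object: every hom into `X` extends at most in one way along
`k`-dense monomorphisms. -/
def IsSepObj (Ω : C) (tr : ⊤_ C ⟶ Ω) (k : Ω ⟶ Ω) (X : C) : Prop :=
  ∀ ⦃A B : C⦄ (m : A ⟶ B), Mono m → IsDense Ω tr k m →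
    Function.Injective (fun g : B ⟶ X => m ≫ g)

/-- `n` is the `k`-closure of the monomorphism `m`: `n` is classified by
`k ∘ char m`. -/
def IsClosureOf (Ω : C) (tr : ⊤_ C ⟶ Ω) (k : Ω ⟶ Ω) {A A' B : C}
    (m : A ⟶ B) (n : A' ⟶ B) : Prop :=
  ∃ c : B ⟶ Ω, Classifies Ω tr m c ∧ Classifies Ω tr n (c ≫ k)

/-- A dfs `(E, J, M)` is cartesian: `E` and `J·E` are stable under pullback and
every morphism of `M·J` is a monomorphism. -/
def IsCartesian (E J M : MorphismProperty C) : Prop :=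
  StableUnderPB E ∧ StableUnderPB (Comp J E) ∧
    ∀ ⦃A B : C⦄ (f : A ⟶ B), Comp M J f → Mono f

end Topos

end DFS

/-!
In any double factorization system, `M` and `M·J` are the right orthogonal classes of `J·E`
and `E`, so both are stable under pullback. Given (i), a pullback `f'` of a morphism of `J`
lies in `J·E` by hypothesis and in `M·J` by orthogonality; comparing the two factorizations
exhibits the `M`-part of `f'` as a split epimorphism, hence (being monic) an isomorphism, so
`f' ∈ J`. Conversely, under (ii), a pullback of `e ≫ j` is obtained by pulling back `j` and then
`e`, and `M·J` consists of composites of monomorphisms.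
-/

namespace DFS

variable {C : Type u} [Category.{v} C]

theorem Orth.of_isPullback {X Y A B A' B' : C} {f : X ⟶ Y} {m : A ⟶ B} {g : B' ⟶ B}
    {m' : A' ⟶ B'} {k : A' ⟶ A} (ho : Orth f m) (pb : IsPullback k m' m g) : Orth f m' := by
  intro u v huv
  obtain ⟨d, ⟨hd₁, hd₂⟩, hd⟩ :=
    ho (u ≫ k) (v ≫ g) (by rw [Category.assoc, pb.w, reassoc_of% huv])
  refine ⟨pb.lift d v hd₂, ⟨pb.hom_ext (by simp [hd₁]) (by simp [huv]), pb.lift_snd _ _ _⟩, ?_⟩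
  rintro y ⟨hy₁, hy₂⟩
  refine pb.hom_ext ?_ (by simp [hy₂])
  rw [pb.lift_fst]
  exact hd _ ⟨by rw [reassoc_of% hy₁], by rw [Category.assoc, pb.w, reassoc_of% hy₂]⟩

theorem isIso_of_orth {X B Y : C} {i : X ⟶ B} {m : B ⟶ Y} (h₁ : Orth i (i ≫ m))
    (h₂ : Orth i m) : IsIso i := by
  obtain ⟨d, ⟨hid, hdm⟩, -⟩ := h₁ (𝟙 X) m (Category.id_comp _)
  obtain ⟨_, -, huniq⟩ := h₂ i m rfl
  have hdi : d ≫ i = 𝟙 B :=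
    (huniq _ ⟨by rw [reassoc_of% hid], by simpa using hdm⟩).trans
      (huniq _ ⟨by simp, by simp⟩).symm
  exact ⟨d, hid, hdi⟩

theorem StableUnderPB.comp [HasPullbacks C] {P Q : MorphismProperty C} (hP : StableUnderPB P)
    (hQ : StableUnderPB Q) : StableUnderPB (Comp Q P) := by
  rintro A B A' B' _ g f' k pb ⟨Z, p, q, hp, hq, rfl⟩
  have t := IsPullback.of_hasPullback q g
  have w : (k ≫ p) ≫ q = f' ≫ g := by simpa using pb.w
  refine ⟨pullback q g, t.lift (k ≫ p) f' w, pullback.snd q g, hP p (pullback.fst q g) _ k ?_ hp,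
    hQ q g _ _ t hq, t.lift_snd _ _ _⟩
  exact IsPullback.of_bot (by rwa [t.lift_snd]) (t.lift_fst _ _ _).symm t

namespace IsDFS

variable {E J M : MorphismProperty C}

theorem isIso_of_comp_eq_id (h : IsDFS E J M) {A P Q : C} {e : A ⟶ P} {j : P ⟶ Q}
    {m : Q ⟶ A} (he : E e) (hj : J j) (hm : M m) (hfac : e ≫ j ≫ m = 𝟙 A) :
    IsIso e ∧ IsIso j ∧ IsIso m := by
  obtain ⟨st, -, huniq⟩ := h.lift e j j m e m he hj hj hm rfl
  have hid := huniq (𝟙 P, 𝟙 Q) ⟨by simp, by simp, by simp⟩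
  have hcyc := huniq (j ≫ m ≫ e, m ≫ e ≫ j) ⟨by simp [reassoc_of% hfac], by simp, by simp [hfac]⟩
  have h₁ : j ≫ m ≫ e = 𝟙 P := congrArg Prod.fst (hcyc.trans hid.symm)
  have h₂ : m ≫ e ≫ j = 𝟙 Q := congrArg Prod.snd (hcyc.trans hid.symm)
  exact ⟨⟨j ≫ m, hfac, by simpa using h₁⟩, ⟨m ≫ e, h₁, by simpa using h₂⟩,
    ⟨e ≫ j, h₂, by simpa using hfac⟩⟩

theorem E_id (h : IsDFS E J M) (A : C) : E (𝟙 A) := by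
  obtain ⟨P, Q, e, j, m, he, hj, hm, hfac⟩ := h.fac (𝟙 A)
  obtain ⟨-, _, _⟩ := h.isIso_of_comp_eq_id he hj hm hfac
  rw [← hfac]
  exact h.postcomp_iso_E e (j ≫ m) inferInstance he

theorem J_id_s11 (h : IsDFS E J M) (A : C) : J (𝟙 A) := by
  obtain ⟨P, Q, e, j, m, he, hj, hm, hfac⟩ := h.fac (𝟙 A)
  obtain ⟨he', -, hm'⟩ := h.isIso_of_comp_eq_id he hj hm hfac
  rw [← hfac]
  exact h.comp_iso_J e j m he' hm' hj

theorem M_id (h : IsDFS E J M) (A : C) : M (𝟙 A) := by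
  obtain ⟨P, Q, e, j, m, he, hj, hm, hfac⟩ := h.fac (𝟙 A)
  obtain ⟨_, _, -⟩ := h.isIso_of_comp_eq_id he hj hm hfac
  rw [← hfac, ← Category.assoc]
  exact h.precomp_iso_M (e ≫ j) m inferInstance hm

theorem orth_E_comp (h : IsDFS E J M) {X B D D' F : C} {e : X ⟶ B} {j : D ⟶ D'}
    {m : D' ⟶ F} (he : E e) (hj : J j) (hm : M m) : Orth e (j ≫ m) := by
  intro u v huv
  obtain ⟨⟨s, t⟩, ⟨hs, hst, ht⟩, huniq⟩ :=
    h.lift e (𝟙 B) j m u v he (h.J_id_s11 B) hj hm (by simpa using huv.symm)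
  dsimp only at hs hst ht huniq
  refine ⟨s, ⟨hs, by rw [reassoc_of% hst, ht]⟩, fun y hy => ?_⟩
  exact congrArg Prod.fst (huniq (y, y ≫ j) ⟨hy.1, by simp, by simpa using hy.2⟩)

theorem orth_comp_M (h : IsDFS E J M) {X B B' D F : C} {e : X ⟶ B} {j : B ⟶ B'}
    {m : D ⟶ F} (he : E e) (hj : J j) (hm : M m) : Orth (e ≫ j) m := by
  intro u v huv
  obtain ⟨⟨s, t⟩, ⟨hs, hst, ht⟩, huniq⟩ :=
    h.lift e j (𝟙 D) m u v he hj (h.J_id_s11 D) hm (by simpa using huv.symm)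
  dsimp only at hs hst ht huniq
  refine ⟨t, ⟨by rw [Category.assoc, ← hst, Category.comp_id, hs], ht⟩, fun y hy => ?_⟩
  exact congrArg Prod.snd (huniq (j ≫ y, y) ⟨by simpa using hy.1, by simp, hy.2⟩)

theorem M_of_orth (h : IsDFS E J M) {X Y : C} {f : X ⟶ Y}
    (hf : ∀ ⦃P Q R : C⦄ (e : P ⟶ Q) (j : Q ⟶ R), E e → J j → Orth (e ≫ j) f) : M f := by
  obtain ⟨A, B, e, j, m, he, hj, hm, rfl⟩ := h.fac f
  have hej : Orth (e ≫ j) ((e ≫ j) ≫ m) := by rw [Category.assoc]; exact hf e j he hj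
  have : IsIso (e ≫ j) := isIso_of_orth hej (h.orth_comp_M he hj hm)
  simpa using h.precomp_iso_M (e ≫ j) m this hm

theorem comp_MJ_of_orth (h : IsDFS E J M) {X Y : C} {f : X ⟶ Y}
    (hf : ∀ ⦃P Q : C⦄ (e : P ⟶ Q), E e → Orth e f) : Comp M J f := by
  obtain ⟨A, B, e, j, m, he, hj, hm, rfl⟩ := h.fac f
  have : IsIso e := isIso_of_orth (hf e he) (h.orth_E_comp he hj hm)
  have hej : J (e ≫ j) := by simpa using h.comp_iso_J e j (𝟙 B) this inferInstance hj
  exact ⟨B, e ≫ j, m, hej, hm, Category.assoc _ _ _⟩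

theorem J_of_comp_JE_of_comp_MJ (h : IsDFS E J M)
    (hM : ∀ ⦃A B : C⦄ (f : A ⟶ B), M f → Mono f) {X Y : C} {f : X ⟶ Y}
    (hJE : Comp J E f) (hMJ : Comp M J f) : J f := by
  obtain ⟨Z, e, j, he, hj, rfl⟩ := hJE
  obtain ⟨W, j', m, hj', hm, hfac⟩ := hMJ
  obtain ⟨⟨s, t⟩, ⟨-, -, ht⟩, -⟩ :=
    h.lift e j j' m (𝟙 X) (𝟙 Y) he hj hj' hm (by simp [hfac])
  have := hM m hm
  have : IsIso m := ⟨t, by rw [← cancel_mono m]; simp [ht], ht⟩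
  simpa [hfac] using h.comp_iso_J (𝟙 X) j' m inferInstance this hj'

theorem stableUnderPB_M (h : IsDFS E J M) : StableUnderPB M :=
  fun _ _ _ _ _ _ _ _ pb hf => h.M_of_orth fun _ _ _ _ _ he hj =>
    (h.orth_comp_M he hj hf).of_isPullback pb

theorem stableUnderPB_J (h : IsDFS E J M) (hM : ∀ ⦃A B : C⦄ (f : A ⟶ B), M f → Mono f)
    (hJE : StableUnderPB (Comp J E)) : StableUnderPB J := by
  intro A B A' B' f g f' k pb hf
  refine h.J_of_comp_JE_of_comp_MJ hM
    (hJE f g f' k pb ⟨A, 𝟙 A, f, h.E_id A, hf, Category.id_comp f⟩)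
    (h.comp_MJ_of_orth fun _ _ e he => ?_)
  have hef := h.orth_E_comp he hf (h.M_id B)
  rw [Category.comp_id] at hef
  exact hef.of_isPullback pb

end IsDFS

end DFS

theorem statement11_general {C : Type u} [Category.{v} C] [HasFiniteLimits C]
    (E J M : MorphismProperty C) (h : DFS.IsDFS E J M) :
    DFS.IsCartesian E J M ↔
      ((∀ ⦃A B : C⦄ (f : A ⟶ B), M f → Mono f) ∧
       (∀ ⦃A B : C⦄ (f : A ⟶ B), J f → Mono f) ∧
       DFS.StableUnderPB E ∧ DFS.StableUnderPB J ∧ DFS.StableUnderPB M) := by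
  constructor
  · rintro ⟨hE, hJE, hMJ⟩
    have hM : ∀ ⦃A B : C⦄ (f : A ⟶ B), M f → Mono f := fun A _ f hf =>
      hMJ f ⟨A, 𝟙 A, f, h.J_id_s11 A, hf, Category.id_comp f⟩
    exact ⟨hM, fun _ B f hf => hMJ f ⟨B, f, 𝟙 B, hf, h.M_id B, Category.comp_id f⟩, hE,
      h.stableUnderPB_J hM hJE, h.stableUnderPB_M⟩
  · rintro ⟨hM, hJ, hE, hJ', -⟩
    refine ⟨hE, hE.comp hJ', ?_⟩
    rintro _ _ _ ⟨_, j, m, hj, hm, rfl⟩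
    have := hJ j hj
    have := hM m hm
    exact mono_comp j m

/-- For a dfs `(E, J, M)` on a topos `C` (finite limits, a subobject
classifier and exponentials), the following are equivalent: (i) the dfs is cartesian
(`E` and `J·E` stable under pullback, `M·J ⊆ Mono`); (ii) every morphism of `M` and
every morphism of `J` is a monomorphism, and `E`, `J`, `M` are each stable under
pullback. -/
theorem statement11 {C : Type u} [Category.{v} C] [HasFiniteLimits C]
    [CartesianMonoidalCategory C] [MonoidalClosed C] (Ω : C) (tr : ⊤_ C ⟶ Ω) (hΩ : DFS.IsClassifier Ω tr)
    (E J M : MorphismProperty C) (h : DFS.IsDFS E J M) :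
    DFS.IsCartesian E J M ↔
      ((∀ ⦃A B : C⦄ (f : A ⟶ B), M f → Mono f) ∧
       (∀ ⦃A B : C⦄ (f : A ⟶ B), J f → Mono f) ∧
       DFS.StableUnderPB E ∧ DFS.StableUnderPB J ∧ DFS.StableUnderPB M) :=
  statement11_general E J M h
end

section
/- Let (E, J, M) be a cartesian double factorization system on a topos C. Let m∘j∘e be the (E, J, M)-factorization of the subobject classifier true : 1 → Ω, and set k = char(m). Then k : Ω → Ω is a Lawvere–Tierney topology on C; moreover M equals the class of k-closed monomorphisms, J·E equals DnsMono_k·Epi, and (E, J, M) is a Bousfield localization of the dfs (Epi, DnsMono_k, ClsMono_k), where DnsMono_k and ClsMono_k denote the classes of k-dense and k-closed monomorphisms. -/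
open CategoryTheory CategoryTheory.Limits

universe v u v₂ u₂

/-!
`(J·E, M)` is an orthogonal factorization system whose left class is stable under pullback.
For a mono `n` classified by `c`, the pullback of `m` along `c` is an `M`-subobject classified
by `c ≫ k`, and `n` factors through it by a `J·E`-map because `n` is the pullback of
`tr = (e ≫ j) ≫ m` along `c`; so `c ≫ k` classifies the `M`-part of `n`. Hence `c ≫ k = c`
exactly for `M`-monos, which gives `tr ≫ k = tr`, `k ≫ k = k` and `M = ClsMono_k`, and the
meet axiom holds because `m × m` is the `M`-part of `lift tr tr = lift (e ≫ j) (e ≫ j) ≫ m × m`.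
A mono is `k`-dense iff its `M`-part is invertible, iff it lies in `J·E`. Finally a topos is
balanced, so `Epi ⊆ E`, and it has epi-mono factorizations, the image of `f` being the internal
intersection of all subobjects through which `f` factors; this gives the two remaining claims.
-/

namespace DFS

variable {C : Type u} [Category.{v} C]

section Orthogonality

variable {A B X Y : C}

lemma Orth.of_isIso_left (f : A ⟶ B) [IsIso f] (g : X ⟶ Y) : Orth f g := by
  intro u v huv
  refine ⟨inv f ≫ u, ⟨by simp, by simp [huv]⟩, fun w hw => by simp [← hw.1]⟩

lemma Orth.of_isIso_right (f : A ⟶ B) (g : X ⟶ Y) [IsIso g] : Orth f g := by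
  intro u v huv
  refine ⟨v ≫ inv g, ⟨by rw [← Category.assoc, ← huv]; simp, by simp⟩,
    fun w hw => by simp [← hw.2]⟩

lemma Orth.comp_left {Z : C} {f : A ⟶ B} {f' : B ⟶ Z} {g : X ⟶ Y}
    (h₁ : Orth f g) (h₂ : Orth f' g) : Orth (f ≫ f') g := by
  intro u v huv
  obtain ⟨a, ⟨ha₁, ha₂⟩, ha⟩ := h₁ u (f' ≫ v) (by simp [huv])
  obtain ⟨b, ⟨hb₁, hb₂⟩, hb⟩ := h₂ a v ha₂
  refine ⟨b, ⟨by simp [hb₁, ha₁], hb₂⟩, fun y hy => hb y ⟨ha _ ⟨?_, ?_⟩, hy.2⟩⟩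
  · simpa using hy.1
  · simp [hy.2]

lemma Orth.comp_right {Z : C} {f : A ⟶ B} {g : X ⟶ Y} {g' : Y ⟶ Z}
    (h₁ : Orth f g) (h₂ : Orth f g') : Orth f (g ≫ g') := by
  intro u v huv
  obtain ⟨a, ⟨ha₁, ha₂⟩, ha⟩ := h₂ (u ≫ g) v (by simpa using huv)
  obtain ⟨b, ⟨hb₁, hb₂⟩, hb⟩ := h₁ u a ha₁.symm
  refine ⟨b, ⟨hb₁, by simp [reassoc_of% hb₂, ha₂]⟩, fun y hy => hb y ⟨hy.1, ha _ ⟨?_, ?_⟩⟩⟩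
  · simp [reassoc_of% hy.1]
  · simpa using hy.2

lemma Orth.of_isPullback_s12 {X' P : C} {f : A ⟶ B} {g : X ⟶ Y} {q : X' ⟶ Y} {p : P ⟶ X}
    {g' : P ⟶ X'} (sq : IsPullback p g' g q) (hf : Orth f g) : Orth f g' := by
  intro u v huv
  obtain ⟨d, ⟨hd₁, hd₂⟩, hd⟩ := hf (u ≫ p) (v ≫ q) (by simp [sq.w, reassoc_of% huv])
  refine ⟨sq.lift d v hd₂, ⟨sq.hom_ext (by simp [hd₁]) (by simp [huv]), by simp⟩,
    fun y hy => sq.hom_ext ?_ (by simp [hy.2])⟩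
  rw [sq.lift_fst]
  exact hd _ ⟨by simp [reassoc_of% hy.1], by simp [sq.w, reassoc_of% hy.2]⟩

lemma Orth.exists_iso_of_fac_eq {Z Y' : C} {a : X ⟶ Y} {b : Y ⟶ Z} {a' : X ⟶ Y'}
    {b' : Y' ⟶ Z} (w : a ≫ b = a' ≫ b') (h : Orth a b) (h₁₂ : Orth a b') (h₂₁ : Orth a' b)
    (h' : Orth a' b') : ∃ θ : Y ≅ Y', a ≫ θ.hom = a' ∧ θ.hom ≫ b' = b := by
  obtain ⟨θ, ⟨hθ₁, hθ₂⟩, -⟩ := h₁₂ a' b w.symm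
  obtain ⟨θ', ⟨hθ'₁, hθ'₂⟩, -⟩ := h₂₁ a b' w
  have hid : θ ≫ θ' = 𝟙 Y := (h a b rfl).unique
    ⟨by simp [reassoc_of% hθ₁, hθ'₁], by simp [hθ'₂, hθ₂]⟩ ⟨by simp, by simp⟩
  have hid' : θ' ≫ θ = 𝟙 Y' := (h' a' b' rfl).unique
    ⟨by simp [reassoc_of% hθ'₁, hθ₁], by simp [hθ₂, hθ'₂]⟩ ⟨by simp, by simp⟩
  exact ⟨⟨θ, θ', hid, hid'⟩, hθ₁, hθ₂⟩

end Orthogonality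

namespace IsFS

variable {L R : MorphismProperty C} {A B X Y : C}

lemma orth (hLR : IsFS L R) {f : A ⟶ B} {g : X ⟶ Y} (hf : L f) (hg : R g) : Orth f g :=
  (hLR.left_iff f).1 hf g hg

lemma left_of_isIso (hLR : IsFS L R) (f : A ⟶ B) [IsIso f] : L f :=
  (hLR.left_iff f).2 fun _ _ g _ => Orth.of_isIso_left f g

lemma right_of_isIso (hLR : IsFS L R) (g : X ⟶ Y) [IsIso g] : R g :=
  (hLR.right_iff g).2 fun _ _ f _ => Orth.of_isIso_right f g

lemma left_comp (hLR : IsFS L R) {Z : C} {f : A ⟶ B} {f' : B ⟶ Z} (hf : L f) (hf' : L f') :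
    L (f ≫ f') :=
  (hLR.left_iff _).2 fun _ _ _ hg => (hLR.orth hf hg).comp_left (hLR.orth hf' hg)

lemma right_comp (hLR : IsFS L R) {Z : C} {g : X ⟶ Y} {g' : Y ⟶ Z} (hg : R g) (hg' : R g') :
    R (g ≫ g') :=
  (hLR.right_iff _).2 fun _ _ _ hf => (hLR.orth hf hg).comp_right (hLR.orth hf hg')

lemma stableUnderPB_right (hLR : IsFS L R) : StableUnderPB R := fun _ _ _ _ _ _ _ _ sq hg =>
  (hLR.right_iff _).2 fun _ _ _ hf => (hLR.orth hf hg).of_isPullback_s12 sq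

lemma exists_iso_of_fac_eq (hLR : IsFS L R) {Z Y' : C} {a : X ⟶ Y} {b : Y ⟶ Z} {a' : X ⟶ Y'}
    {b' : Y' ⟶ Z} (ha : L a) (hb : R b) (ha' : L a') (hb' : R b') (w : a ≫ b = a' ≫ b') :
    ∃ θ : Y ≅ Y', a ≫ θ.hom = a' ∧ θ.hom ≫ b' = b :=
  Orth.exists_iso_of_fac_eq w (hLR.orth ha hb) (hLR.orth ha hb') (hLR.orth ha' hb)
    (hLR.orth ha' hb')

end IsFS

namespace IsDFS

variable {E J M : MorphismProperty C} {X Y : C}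

lemma isIso_of_fac_eq_id (h : IsDFS E J M) {A B : C} {e : X ⟶ A} {j : A ⟶ B} {m : B ⟶ X}
    (he : E e) (hj : J j) (hm : M m) (hfac : e ≫ j ≫ m = 𝟙 X) :
    IsIso e ∧ IsIso j ∧ IsIso m := by
  obtain ⟨_, -, huniq⟩ := h.lift e j j m e m he hj hj hm rfl
  have hid : ((𝟙 A, 𝟙 B) : (A ⟶ A) × (B ⟶ B)) = (j ≫ m ≫ e, m ≫ e ≫ j) :=
    (huniq _ ⟨by simp, by simp, by simp⟩).trans
      (huniq _ ⟨by simp [reassoc_of% hfac], by simp, by simp [hfac]⟩).symm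
  simp only [Prod.mk.injEq] at hid
  exact ⟨⟨j ≫ m, hfac, by simpa using hid.1.symm⟩, ⟨m ≫ e, hid.1.symm, by simpa using hid.2.symm⟩,
    ⟨e ≫ j, hid.2.symm, by simpa using hfac⟩⟩

lemma J_of_isIso (h : IsDFS E J M) (i : X ⟶ Y) [IsIso i] : J i := by
  obtain ⟨_, _, e, j, m, he, hj, hm, hfac⟩ := h.fac (𝟙 X)
  obtain ⟨he', -, hm'⟩ := h.isIso_of_fac_eq_id he hj hm hfac
  simpa [reassoc_of% hfac] using h.comp_iso_J e j (m ≫ i) he' inferInstance hj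

lemma JE_of_E (h : IsDFS E J M) {f : X ⟶ Y} (hf : E f) : Comp J E f :=
  ⟨Y, f, 𝟙 Y, hf, h.J_of_isIso _, Category.comp_id f⟩

lemma orth_JE_M (h : IsDFS E J M) {D D' : C} {f : X ⟶ Y} {g : D ⟶ D'} (hf : Comp J E f)
    (hg : M g) : Orth f g := by
  obtain ⟨Z, e, j, he, hj, rfl⟩ := hf
  intro u v huv
  obtain ⟨⟨s, t⟩, ⟨hs, hst, ht⟩, huniq⟩ :=
    h.lift e j (𝟙 D) g u v he hj (h.J_of_isIso _) hg (by simpa using huv.symm)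
  refine ⟨t, ⟨by simpa [← hst] using hs, ht⟩, fun y hy => ?_⟩
  exact congrArg Prod.snd (huniq (j ≫ y, y) ⟨by simpa using hy.1, by simp, hy.2⟩)

lemma isFS (h : IsDFS E J M) : IsFS (Comp J E) M where
  fac _ _ f := by
    obtain ⟨_, B, e, j, m, he, hj, hm, rfl⟩ := h.fac f
    exact ⟨B, e ≫ j, m, ⟨_, e, j, he, hj, rfl⟩, hm, by simp⟩
  left_iff _ _ f := by
    refine ⟨fun hf _ _ g hg => h.orth_JE_M hf hg, fun hf => ?_⟩
    obtain ⟨_, _, e, j, m, he, hj, hm, hfac⟩ := h.fac f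
    obtain ⟨θ, hθ, -⟩ := Orth.exists_iso_of_fac_eq (b' := 𝟙 _) (by simpa using hfac)
      (h.orth_JE_M ⟨_, e, j, he, hj, rfl⟩ hm) (Orth.of_isIso_right _ _) (hf m hm)
      (Orth.of_isIso_right _ _)
    have hjθ : J (j ≫ θ.hom) := by
      simpa using h.comp_iso_J (𝟙 _) j θ.hom inferInstance inferInstance hj
    exact ⟨_, e, j ≫ θ.hom, he, hjθ, by simpa using hθ⟩
  right_iff _ _ g := by
    refine ⟨fun hg _ _ f hf => h.orth_JE_M hf hg, fun hg => ?_⟩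
    obtain ⟨_, _, e, j, m, he, hj, hm, hfac⟩ := h.fac g
    obtain ⟨θ, -, hθ⟩ := Orth.exists_iso_of_fac_eq (a' := 𝟙 _) (by simpa using hfac)
      (h.orth_JE_M ⟨_, e, j, he, hj, rfl⟩ hm) (hg _ ⟨_, e, j, he, hj, rfl⟩)
      (Orth.of_isIso_left _ _) (Orth.of_isIso_left _ _)
    simpa [← hθ] using h.precomp_iso_M θ.inv m inferInstance hm

end IsDFS

lemma IsCartesian.mono_of_M {E J M : MorphismProperty C} (h : IsDFS E J M)
    (hc : IsCartesian E J M) {X Y : C} {g : X ⟶ Y} (hg : M g) : Mono g :=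
  hc.2.2 g ⟨X, 𝟙 X, g, h.J_of_isIso _, hg, Category.id_comp g⟩

section Classifier

variable [HasTerminal C] {Ω : C} {tr : ⊤_ C ⟶ Ω}

noncomputable def tru (tr : ⊤_ C ⟶ Ω) (X : C) : X ⟶ Ω := terminal.from X ≫ tr

@[simp]
lemma comp_tru {X Z : C} (t : Z ⟶ X) : t ≫ tru tr X = tru tr Z := by
  simp only [tru, ← Category.assoc, terminal.comp_from]

namespace Classifies

variable {S X : C} {n : S ⟶ X} {c : X ⟶ Ω}

lemma mk (hn : Mono n) (w : n ≫ c = tru tr S)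
    (hlift : ∀ ⦃T : C⦄ (g : T ⟶ X), g ≫ c = tru tr T → ∃ g' : T ⟶ S, g' ≫ n = g) :
    Classifies Ω tr n c :=
  IsPullback.mk' w.symm (fun _ _ _ _ h => hn.right_cancellation _ _ h) fun _ a g hg => by
    obtain ⟨g', hg'⟩ := hlift g (by rw [← hg, tru, Subsingleton.elim a (terminal.from _)])
    exact ⟨g', Subsingleton.elim _ _, hg'⟩

lemma mono (hcl : Classifies Ω tr n c) : Mono n :=
  hcl.mono_snd_of_mono (terminalIsTerminal.mono_from tr)

lemma comp_eq_tru (hcl : Classifies Ω tr n c) : n ≫ c = tru tr S := hcl.w.symm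

lemma comp_eq_tru_of_fac (hcl : Classifies Ω tr n c) {T : C} {g : T ⟶ X} {g' : T ⟶ S}
    (h : g' ≫ n = g) : g ≫ c = tru tr T := by
  rw [← h, Category.assoc, hcl.comp_eq_tru, comp_tru]

lemma exists_fac_of_comp_eq_tru (hcl : Classifies Ω tr n c) {T : C} {g : T ⟶ X}
    (hg : g ≫ c = tru tr T) : ∃ g' : T ⟶ S, g' ≫ n = g :=
  ⟨hcl.lift (terminal.from T) g hg.symm, hcl.lift_snd _ _ _⟩

lemma precomp_iso (hcl : Classifies Ω tr n c) {S' : C} (i : S' ⟶ S) [IsIso i] :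
    Classifies Ω tr (i ≫ n) c := by
  simpa [Classifies] using (IsPullback.of_vert_isIso (fst := terminal.from S') (f := 𝟙 (⊤_ C))
    ⟨Subsingleton.elim _ _⟩).paste_vert hcl

lemma exists_iso {S' : C} {n' : S' ⟶ X} (h : Classifies Ω tr n c)
    (h' : Classifies Ω tr n' c) : ∃ i : S ≅ S', i.hom ≫ n' = n :=
  ⟨h.isoIsPullback _ _ h', h.isoIsPullback_hom_snd _ _ h'⟩

lemma of_isIso (n : S ⟶ X) [IsIso n] : Classifies Ω tr n (tru tr X) :=
  mk inferInstance (comp_tru n) fun _ g _ => ⟨g ≫ inv n, by simp⟩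

end Classifies

lemma IsClassifier.eq (hΩ : IsClassifier Ω tr) {S X : C} {n : S ⟶ X} (hn : Mono n)
    {c c' : X ⟶ Ω} (h : Classifies Ω tr n c) (h' : Classifies Ω tr n c') : c = c' :=
  (hΩ n hn).unique h h'

lemma IsClassifier.isIso_of_mono_of_epi (hΩ : IsClassifier Ω tr) {X Y : C} (f : X ⟶ Y)
    [Mono f] [Epi f] : IsIso f := by
  obtain ⟨c, hcl, -⟩ := hΩ f inferInstance
  have hc : c = tru tr Y := by
    rw [← cancel_epi f, hcl.comp_eq_tru, comp_tru]
  obtain ⟨i, hi⟩ := (hc ▸ hcl).exists_iso (Classifies.of_isIso (𝟙 Y))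
  rw [Category.comp_id] at hi
  rw [← hi]
  infer_instance

lemma IsCartesian.E_of_epi {E J M : MorphismProperty C} (h : IsDFS E J M)
    (hc : IsCartesian E J M) (hΩ : IsClassifier Ω tr) {X Y : C} (f : X ⟶ Y) [Epi f] : E f := by
  obtain ⟨_, _, e, j, m, he, hj, hm, rfl⟩ := h.fac f
  have : Mono (j ≫ m) := hc.2.2 _ ⟨_, j, m, hj, hm, rfl⟩
  have : Epi (j ≫ m) := epi_of_epi e _
  exact h.postcomp_iso_E e _ (hΩ.isIso_of_mono_of_epi _) he

end Classifier

section Products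

variable [HasBinaryProducts C]

lemma isPullback_snd_prod_map_id {A B : C} (f : A ⟶ B) (X : C) :
    IsPullback prod.snd (prod.map (𝟙 X) f) f prod.snd :=
  IsPullback.mk' (by simp)
    (fun _ _ _ h₁ h₂ => by
      ext
      · simpa using congrArg (· ≫ prod.fst) h₂
      · simpa using h₁)
    fun _ a b h => ⟨prod.lift (b ≫ prod.fst) a, by simp [prod.lift_snd],
      by ext <;> simp [h, prod.lift_fst, prod.lift_snd]⟩

lemma prod_map_mem {P : MorphismProperty C} (hP : StableUnderPB P)
    (hcomp : ∀ ⦃X Y Z : C⦄ (f : X ⟶ Y) (g : Y ⟶ Z), P f → P g → P (f ≫ g))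
    {X Y X' Y' : C} {f : X ⟶ Y} {g : X' ⟶ Y'} (hf : P f) (hg : P g) : P (prod.map f g) := by
  simpa using hcomp _ _ (hP _ _ _ _ (IsPullback.of_prod_fst_with_id f X') hf)
    (hP _ _ _ _ (isPullback_snd_prod_map_id g Y) hg)

variable [HasTerminal C] {Ω : C} {tr : ⊤_ C ⟶ Ω}

lemma Classifies.prod_map {S X S' X' : C} {n : S ⟶ X} {n' : S' ⟶ X'} {c : X ⟶ Ω}
    {c' : X' ⟶ Ω} {meet : Ω ⨯ Ω ⟶ Ω} (h : Classifies Ω tr n c) (h' : Classifies Ω tr n' c')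
    (hmeet : Classifies Ω tr (prod.lift tr tr) meet) :
    Classifies Ω tr (prod.map n n') (prod.map c c' ≫ meet) := by
  have := h.mono
  have := h'.mono
  refine Classifies.mk inferInstance ?_ fun T g hg => ?_
  · rw [prod.map_map_assoc, h.comp_eq_tru, h'.comp_eq_tru,
      show prod.map (tru tr S) (tru tr S') = terminal.from _ ≫ prod.lift tr tr by
        ext <;> simp [tru, prod.lift_fst, prod.lift_snd],
      Category.assoc, hmeet.comp_eq_tru, comp_tru]
  obtain ⟨t, ht⟩ := hmeet.exists_fac_of_comp_eq_tru (g := g ≫ prod.map c c') (by simpa using hg)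
  rw [Subsingleton.elim t (terminal.from T)] at ht
  obtain ⟨x, hx⟩ := h.exists_fac_of_comp_eq_tru (g := g ≫ prod.fst)
    (by simpa [tru, prod.lift_fst] using congrArg (· ≫ prod.fst) ht.symm)
  obtain ⟨y, hy⟩ := h'.exists_fac_of_comp_eq_tru (g := g ≫ prod.snd)
    (by simpa [tru, prod.lift_snd] using congrArg (· ≫ prod.snd) ht.symm)
  exact ⟨prod.lift x y, by ext <;> simp [hx, hy, prod.lift_fst, prod.lift_snd]⟩

end Products

section InducedTopology

variable [HasFiniteLimits C] {Ω : C} {tr : ⊤_ C ⟶ Ω}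

lemma Classifies.pullback_snd {X : C} (c : X ⟶ Ω) : Classifies Ω tr (pullback.snd tr c) c := by
  have := terminalIsTerminal.mono_from tr
  simpa [Classifies, Subsingleton.elim (pullback.fst tr c) (terminal.from _)] using
    IsPullback.of_hasPullback tr c

structure IsInducedByStableFS (L R : MorphismProperty C) (Ω : C) (tr : ⊤_ C ⟶ Ω)
    (k : Ω ⟶ Ω) : Prop where
  isFS : IsFS L R
  stableUnderPB_left : StableUnderPB L
  exists_fac : ∃ (B : C) (a : ⊤_ C ⟶ B) (m : B ⟶ Ω),
    L a ∧ R m ∧ a ≫ m = tr ∧ Classifies Ω tr m k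

namespace IsInducedByStableFS

variable {L R : MorphismProperty C} {k : Ω ⟶ Ω} {S X : C} {n : S ⟶ X} {c : X ⟶ Ω}

lemma exists_closure (hk : IsInducedByStableFS L R Ω tr k) (hcl : Classifies Ω tr n c) :
    ∃ (S' : C) (u : S ⟶ S') (n' : S' ⟶ X),
      L u ∧ R n' ∧ u ≫ n' = n ∧ Classifies Ω tr n' (c ≫ k) := by
  obtain ⟨B, a, m, ha, hm, hfac, hmk⟩ := hk.exists_fac
  have sq : IsPullback (pullback.snd c m) (pullback.fst c m) m c :=
    (IsPullback.of_hasPullback c m).flip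
  have hn : IsPullback (terminal.from S) n (a ≫ m) c := hfac ▸ hcl
  refine ⟨_, _, _, hk.stableUnderPB_left _ _ _ _ (IsPullback.of_bot' hn sq) ha,
    hk.isFS.stableUnderPB_right _ _ _ _ sq hm, sq.lift_snd _ _ _, ?_⟩
  simpa [Classifies] using sq.paste_horiz hmk

lemma classifies_of_fac (hk : IsInducedByStableFS L R Ω tr k) (hcl : Classifies Ω tr n c)
    {S' : C} {u : S ⟶ S'} {n' : S' ⟶ X} (hu : L u) (hn' : R n') (hfac : u ≫ n' = n) :
    Classifies Ω tr n' (c ≫ k) := by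
  obtain ⟨_, u₀, n₀, hu₀, hn₀, hfac₀, hcl₀⟩ := hk.exists_closure hcl
  obtain ⟨θ, -, hθ⟩ := hk.isFS.exists_iso_of_fac_eq hu₀ hn₀ hu hn' (hfac₀.trans hfac.symm)
  simpa [← hθ] using hcl₀.precomp_iso θ.inv

lemma comp_eq_of_right (hk : IsInducedByStableFS L R Ω tr k) (hΩ : IsClassifier Ω tr)
    (hn : R n) (hcl : Classifies Ω tr n c) : c ≫ k = c :=
  hΩ.eq hcl.mono (hk.classifies_of_fac hcl (hk.isFS.left_of_isIso (𝟙 S)) hn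
    (Category.id_comp n)) hcl

lemma right_of_comp_eq (hk : IsInducedByStableFS L R Ω tr k) (hcl : Classifies Ω tr n c)
    (hc : c ≫ k = c) : R n := by
  obtain ⟨_, _, n', -, hn', -, hcl'⟩ := hk.exists_closure hcl
  obtain ⟨i, hi⟩ := hcl.exists_iso (hc ▸ hcl')
  rw [← hi]
  exact hk.isFS.right_comp (hk.isFS.right_of_isIso _) hn'

lemma tr_comp (hk : IsInducedByStableFS L R Ω tr k) (hΩ : IsClassifier Ω tr) : tr ≫ k = tr := by
  have := hk.comp_eq_of_right hΩ (hk.isFS.right_of_isIso (𝟙 (⊤_ C)))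
    (Classifies.of_isIso (tr := tr) (𝟙 (⊤_ C)))
  rwa [tru, Subsingleton.elim (terminal.from (⊤_ C)) (𝟙 _), Category.id_comp] at this

lemma comp_self (hk : IsInducedByStableFS L R Ω tr k) (hΩ : IsClassifier Ω tr) : k ≫ k = k := by
  obtain ⟨_, _, m, -, hm, -, hmk⟩ := hk.exists_fac
  exact hk.comp_eq_of_right hΩ hm hmk

lemma meet_comp (hk : IsInducedByStableFS L R Ω tr k) (hΩ : IsClassifier Ω tr)
    {meet : Ω ⨯ Ω ⟶ Ω} (hmeet : Classifies Ω tr (prod.lift tr tr) meet) :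
    meet ≫ k = prod.map k k ≫ meet := by
  obtain ⟨_, a, m, ha, hm, hfac, hmk⟩ := hk.exists_fac
  have hmm : R (prod.map m m) :=
    prod_map_mem hk.isFS.stableUnderPB_right (fun _ _ _ _ _ => hk.isFS.right_comp) hm hm
  have : IsIso (prod.lift (𝟙 (⊤_ C)) (𝟙 (⊤_ C))) :=
    ⟨prod.fst, by simp [prod.lift_fst], by ext⟩
  have haa : L (prod.lift a a) := by
    simpa [prod.lift_map] using hk.isFS.left_comp
      (hk.isFS.left_of_isIso (prod.lift (𝟙 (⊤_ C)) (𝟙 (⊤_ C))))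
      (prod_map_mem hk.stableUnderPB_left (fun _ _ _ _ _ => hk.isFS.left_comp) ha ha)
  have hcl := hk.classifies_of_fac hmeet haa hmm (by simp [prod.lift_map, hfac])
  exact hΩ.eq hcl.mono hcl (hmk.prod_map hmk hmeet)

lemma isLT (hk : IsInducedByStableFS L R Ω tr k) (hΩ : IsClassifier Ω tr) : IsLT Ω tr k :=
  ⟨hk.tr_comp hΩ, hk.comp_self hΩ, fun _ hmeet => hk.meet_comp hΩ hmeet⟩

lemma right_eq_closedMonos (hk : IsInducedByStableFS L R Ω tr k) (hΩ : IsClassifier Ω tr)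
    (hR : ∀ ⦃X Y : C⦄ (f : X ⟶ Y), R f → Mono f) : R = closedMonos Ω tr k := by
  ext X Y f
  refine ⟨fun hf => ?_, fun ⟨_, c, hcl, hc⟩ => hk.right_of_comp_eq hcl hc⟩
  obtain ⟨c, hcl, -⟩ := hΩ f (hR f hf)
  exact ⟨hR f hf, c, hcl, hk.comp_eq_of_right hΩ hf hcl⟩

lemma isDense_of_fac (hk : IsInducedByStableFS L R Ω tr k) (hΩ : IsClassifier Ω tr) [Mono n]
    {Z : C} {p : Z ⟶ S} (hf : L (p ≫ n)) : IsDense Ω tr k n := by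
  obtain ⟨c, hcl, -⟩ := hΩ n inferInstance
  obtain ⟨_, u, n', -, hn', hfac, hcl'⟩ := hk.exists_closure hcl
  obtain ⟨s, ⟨-, hs⟩, -⟩ := hk.isFS.orth hf hn' (p ≫ u) (𝟙 X) (by simp [hfac])
  have := hcl'.mono
  have := IsSplitEpi.mk' ⟨s, hs⟩
  have := isIso_of_mono_of_isSplitEpi n'
  exact ⟨c, hcl, hΩ.eq hcl'.mono hcl' (Classifies.of_isIso n')⟩

lemma left_of_isDense (hk : IsInducedByStableFS L R Ω tr k) (hn : IsDense Ω tr k n) : L n := by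
  obtain ⟨c, hcl, hc⟩ := hn
  obtain ⟨_, u, n', hu, -, hfac, hcl'⟩ := hk.exists_closure hcl
  obtain ⟨i, hi⟩ := (hc ▸ hcl').exists_iso (Classifies.of_isIso (tr := tr) (𝟙 X))
  rw [Category.comp_id] at hi
  rw [← hfac, ← hi]
  exact hk.isFS.left_comp hu (hk.isFS.left_of_isIso _)

lemma left_eq_denseMonos_comp_epis (hk : IsInducedByStableFS L R Ω tr k)
    (hΩ : IsClassifier Ω tr) (hepi : ∀ ⦃X Y : C⦄ (f : X ⟶ Y), Epi f → L f)
    (himage : ∀ ⦃X Y : C⦄ (f : X ⟶ Y), ∃ (I : C) (p : X ⟶ I) (d : I ⟶ Y),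
      Epi p ∧ Mono d ∧ p ≫ d = f) :
    L = Comp (denseMonos Ω tr k) epis := by
  ext X Y f
  refine ⟨fun hf => ?_, fun ⟨_, p, d, hp, ⟨_, hd⟩, hpd⟩ => ?_⟩
  · obtain ⟨I, p, d, hp, hd, rfl⟩ := himage f
    exact ⟨I, p, d, hp, ⟨hd, hk.isDense_of_fac hΩ hf⟩, rfl⟩
  · exact hpd ▸ hk.isFS.left_comp (hepi p hp) (hk.left_of_isDense hd)

end IsInducedByStableFS

end InducedTopology

open MonoidalCategory MonoidalClosed CartesianMonoidalCategory

section InternalForall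

variable [CartesianMonoidalCategory C] [MonoidalClosed C] {Ω : C} {tr : ⊤_ C ⟶ Ω}

noncomputable def internalTrue (tr : ⊤_ C ⟶ Ω) (W : C) : 𝟙_ C ⟶ (ihom W).obj Ω :=
  curry (tru tr (W ⊗ 𝟙_ C))

noncomputable def internalForall (hΩ : IsClassifier Ω tr) (W : C) : (ihom W).obj Ω ⟶ Ω :=
  (hΩ (internalTrue tr W) (isTerminalTensorUnit.mono_from _)).choose

lemma classifies_internalForall (hΩ : IsClassifier Ω tr) (W : C) :
    Classifies Ω tr (internalTrue tr W) (internalForall hΩ W) :=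
  (hΩ (internalTrue tr W) (isTerminalTensorUnit.mono_from _)).choose_spec.1

lemma comp_curry_comp_internalForall_eq_tru_iff (hΩ : IsClassifier Ω tr) {W Z Z' : C}
    (Φ : W ⊗ Z ⟶ Ω) (g : Z' ⟶ Z) :
    g ≫ curry Φ ≫ internalForall hΩ W = tru tr Z' ↔ (W ◁ g) ≫ Φ = tru tr (W ⊗ Z') := by
  have key (t : Z' ⟶ 𝟙_ C) :
      t ≫ internalTrue tr W = g ≫ curry Φ ↔ (W ◁ g) ≫ Φ = tru tr (W ⊗ Z') := by
    rw [internalTrue, ← curry_natural_left, ← curry_natural_left, curry_injective.eq_iff,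
      comp_tru, eq_comm]
  refine ⟨fun hg => ?_, fun hΦ => ?_⟩
  · obtain ⟨t, ht⟩ := (classifies_internalForall hΩ W).exists_fac_of_comp_eq_tru
      ((Category.assoc _ _ _).trans hg)
    exact (key t).1 ht
  · simpa using (classifies_internalForall hΩ W).comp_eq_tru_of_fac ((key (toUnit Z')).2 hΦ)

end InternalForall

section Image

variable [HasFiniteLimits C] [CartesianMonoidalCategory C] [MonoidalClosed C]
  {Ω : C} {tr : ⊤_ C ⟶ Ω} {X Y : C}

/-- The predicate `S ↦ ∀ x, f x ∈ S` on `Ω^Y`. -/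
noncomputable def containsRange (hΩ : IsClassifier Ω tr) (f : X ⟶ Y) : (ihom Y).obj Ω ⟶ Ω :=
  curry ((f ▷ _) ≫ (ihom.ev Y).app Ω) ≫ internalForall hΩ X

/-- The characteristic map of the image of `f`: `y ↦ ∀ S ∈ Ω^Y, (∀ x, f x ∈ S) → y ∈ S`,
quantifying over the subobject of `Ω^Y` classified by `containsRange hΩ f`. -/
noncomputable def imageChar (hΩ : IsClassifier Ω tr) (f : X ⟶ Y) : Y ⟶ Ω :=
  curry ((pullback.snd tr (containsRange hΩ f) ▷ Y) ≫ lift (snd _ _) (fst _ _) ≫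
    (ihom.ev Y).app Ω) ≫ internalForall hΩ _

lemma comp_imageChar (hΩ : IsClassifier Ω tr) (f : X ⟶ Y) :
    f ≫ imageChar hΩ f = tru tr X := by
  set s := pullback.snd tr (containsRange hΩ f)
  have hs : (X ◁ s) ≫ (f ▷ _) ≫ (ihom.ev Y).app Ω = tru tr _ :=
    (comp_curry_comp_internalForall_eq_tru_iff hΩ _ s).1
      (Classifies.pullback_snd (containsRange hΩ f)).comp_eq_tru
  rw [imageChar, comp_curry_comp_internalForall_eq_tru_iff]
  calc _ = lift (snd _ _) (fst _ _) ≫ (X ◁ s) ≫ (f ▷ _) ≫ (ihom.ev Y).app Ω := by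
        simp only [← Category.assoc]
        congr 1
        ext <;> simp [s]
    _ = _ := by rw [hs, comp_tru]

lemma comp_eq_tru_of_comp_imageChar (hΩ : IsClassifier Ω tr) (f : X ⟶ Y) {χ : Y ⟶ Ω}
    (hχ : f ≫ χ = tru tr X) {Z : C} {g : Z ⟶ Y} (hg : g ≫ imageChar hΩ f = tru tr Z) :
    g ≫ χ = tru tr Z := by
  set σ : 𝟙_ C ⟶ (ihom Y).obj Ω := curry (fst Y (𝟙_ C) ≫ χ)
  have hevσ : (Y ◁ σ) ≫ (ihom.ev Y).app Ω = fst Y (𝟙_ C) ≫ χ := by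
    rw [← uncurry_eq, uncurry_curry]
  have hσ : σ ≫ containsRange hΩ f = tru tr _ := by
    rw [containsRange, comp_curry_comp_internalForall_eq_tru_iff, whisker_exchange_assoc,
      hevσ]
    simp [hχ]
  obtain ⟨σ', hσ'⟩ := (Classifies.pullback_snd (containsRange hΩ f)).exists_fac_of_comp_eq_tru hσ
  rw [imageChar, comp_curry_comp_internalForall_eq_tru_iff] at hg
  have hpoint : lift (toUnit Z ≫ σ') (𝟙 Z) ≫ (_ ◁ g) ≫
      (pullback.snd tr (containsRange hΩ f) ▷ Y) ≫ lift (snd _ _) (fst _ _) =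
      lift g (toUnit Z) ≫ (Y ◁ σ) := by
    ext <;> simp [← hσ']
  calc g ≫ χ = lift g (toUnit Z) ≫ (Y ◁ σ) ≫ (ihom.ev Y).app Ω := by simp [hevσ]
    _ = lift (toUnit Z ≫ σ') (𝟙 Z) ≫ (_ ◁ g) ≫
        (pullback.snd tr (containsRange hΩ f) ▷ Y) ≫ lift (snd _ _) (fst _ _) ≫
          (ihom.ev Y).app Ω := by rw [reassoc_of% hpoint]
    _ = tru tr Z := by rw [hg, comp_tru]

lemma exists_epi_mono_fac (hΩ : IsClassifier Ω tr) (f : X ⟶ Y) :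
    ∃ (I : C) (p : X ⟶ I) (d : I ⟶ Y), Epi p ∧ Mono d ∧ p ≫ d = f := by
  have hd := Classifies.pullback_snd (tr := tr) (imageChar hΩ f)
  have := hd.mono
  obtain ⟨p, hp⟩ := hd.exists_fac_of_comp_eq_tru (comp_imageChar hΩ f)
  refine ⟨_, p, _, ⟨fun u v huv => ?_⟩, hd.mono, hp⟩
  -- `f` factors through the equalizer of `u` and `v`, so the image is contained in it.
  obtain ⟨χ, hχ, -⟩ := hΩ (equalizer.ι u v ≫ pullback.snd tr (imageChar hΩ f)) inferInstance
  obtain ⟨r, hr⟩ := hχ.exists_fac_of_comp_eq_tru (comp_eq_tru_of_comp_imageChar hΩ f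
    (hχ.comp_eq_tru_of_fac (g' := equalizer.lift p huv) (by simp [hp])) hd.comp_eq_tru)
  have hrι : r ≫ equalizer.ι u v = 𝟙 _ := by
    rw [← cancel_mono (pullback.snd tr (imageChar hΩ f)), Category.assoc, hr, Category.id_comp]
  rw [← Category.id_comp u, ← Category.id_comp v, ← hrι, Category.assoc, Category.assoc,
    equalizer.condition]

end Image

end DFS

/-- Let `(E, J, M)` be a cartesian dfs on a topos `C`, let
`m ∘ j ∘ e` be the `(E,J,M)`-factorization of `true : 1 ⟶ Ω` and `k = char m`.
Then `k` is a Lawvere–Tierney topology, `M` is the class of `k`-closed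
monomorphisms, `J·E = DnsMono_k · Epi`, and `(E, J, M)` is a Bousfield localization
of the dfs `(Epi, DnsMono_k, ClsMono_k)`, i.e. `ClsMono_k · Epi ⊆ M · E`. -/
theorem statement12 {C : Type u} [Category.{v} C] [HasFiniteLimits C]
    [CartesianMonoidalCategory C] [MonoidalClosed C]
    (Ω : C) (tr : ⊤_ C ⟶ Ω) (hΩ : DFS.IsClassifier Ω tr)
    (E J M : MorphismProperty C) (h : DFS.IsDFS E J M) (hc : DFS.IsCartesian E J M)
    (A B : C) (e : ⊤_ C ⟶ A) (j : A ⟶ B) (m : B ⟶ Ω)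
    (he : E e) (hj : J j) (hm : M m) (hfac : e ≫ j ≫ m = tr)
    (k : Ω ⟶ Ω) (hk : DFS.Classifies Ω tr m k) :
    DFS.IsLT Ω tr k ∧
    M = DFS.closedMonos Ω tr k ∧
    DFS.Comp J E = DFS.Comp (DFS.denseMonos Ω tr k) DFS.epis ∧
    (∀ ⦃X Y : C⦄ (f : X ⟶ Y),
      DFS.Comp (DFS.closedMonos Ω tr k) DFS.epis f → DFS.Comp M E f) := by
  have hind : DFS.IsInducedByStableFS (DFS.Comp J E) M Ω tr k :=
    ⟨h.isFS, hc.2.1, B, e ≫ j, m, ⟨A, e, j, he, hj, rfl⟩, hm, by simpa using hfac, hk⟩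
  have hE : ∀ ⦃X Y : C⦄ (f : X ⟶ Y), Epi f → E f := fun _ _ f _ => hc.E_of_epi h hΩ f
  refine ⟨hind.isLT hΩ, hind.right_eq_closedMonos hΩ fun _ _ _ => hc.mono_of_M h,
    hind.left_eq_denseMonos_comp_epis hΩ (fun _ _ f hf => h.JE_of_E (hE f hf))
      (fun _ _ => DFS.exists_epi_mono_fac hΩ), ?_⟩
  rintro X Y _ ⟨Z, p, d, hp, ⟨-, c, hcl, hck⟩, rfl⟩
  exact ⟨Z, p, d, hE p hp, hind.right_of_comp_eq hcl hck, rfl⟩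
end
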